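/- θ̄ properly contains θ, and every congruence of K properly containing θ contains θ̄; that is, θ̄ is the unique cover of θ in the congruence lattice of K. (Lemma 4.3(3).) -/
import Mathlib


namespace Paper

/-- Direction of a Turing-machine head move. -/
inductive Dir : Type
  | L | R
deriving DecidableEq

/-- A Turing machine with states μ₀, μ₁, …, μ_k (μ₀ the halting state): for each state
μ_i with 1 ≤ i ≤ k and each tape symbol r, exactly one instruction μ_i r s D μ_m,
recorded as `instr i r = (s, D, m)`.  (The value of `instr` at `i = 0` is irrelevant:
no instruction begins with μ₀.) -/
structure TM (k : ℕ) : Type where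
  instr : Fin (k + 1) → Bool → Bool × Dir × Fin (k + 1)

/-- The universe of the algebra B(T):
`zero` = 0, `P j` = P_j, `one`,`two`,`H` the sequential elements U, and the machine
elements `C b i r s` = C_{ir}^s, `D b i r s` = D_{ir}^s, `M b i r` = M_i^r, where
`b = true` marks the barred copy V̄. -/
inductive BT (k : ℕ) : Type
  | zero : BT k
  | P : Fin 3 → BT k
  | one : BT k
  | two : BT k
  | H : BT k
  | C : Bool → Fin (k + 1) → Bool → Bool → BT k
  | D : Bool → Fin (k + 1) → Bool → Bool → BT k
  | M : Bool → Fin (k + 1) → Bool → BT k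
deriving DecidableEq

namespace BT

variable {k : ℕ}

/-- The partial order of B(T): x ≤ y iff x = 0, or x = y, or (x = P₂ and y ∈ {P₀,P₁}). -/
def le (x y : BT k) : Prop :=
  x = zero ∨ x = y ∨ (x = P 2 ∧ (y = P 0 ∨ y = P 1))

/-- x ∧ y: the greatest lower bound for `le`. -/
def meet (x y : BT k) : BT k :=
  if x = y then x
  else if x = P 2 ∧ (y = P 0 ∨ y = P 1) then P 2
  else if y = P 2 ∧ (x = P 0 ∨ x = P 1) then P 2
  else if (x = P 0 ∨ x = P 1) ∧ (y = P 0 ∨ y = P 1) then P 2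
  else zero

/-- membership in P = {P₀,P₁,P₂} -/
def isP : BT k → Bool
  | P _ => true
  | _ => false

/-- membership in U = {1,2,H} -/
def isU : BT k → Bool
  | one => true
  | two => true
  | H => true
  | _ => false

/-- membership in V ∪ V̄ -/
def isVV : BT k → Bool
  | C _ _ _ _ => true
  | D _ _ _ _ => true
  | M _ _ _ => true
  | _ => false

/-- membership in U ∪ V ∪ V̄ -/
def isUVV (x : BT k) : Bool := isU x || isVV x

/-- membership in V₀ = {C_{0r}^s, D_{0r}^s, M₀^r} (unbarred, state μ₀) -/
def isV0 : BT k → Bool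
  | C false i _ _ => i == 0
  | D false i _ _ => i == 0
  | M false i _ => i == 0
  | _ => false

/-- membership in V₁₀⁰ = {C₁₀⁰, M₁⁰, D₁₀⁰} -/
def isV10 (x : BT k) : Bool :=
  x == C false 1 false false || x == M false 1 false || x == D false 1 false false

/-- the bar involution on V ∪ V̄ (identity elsewhere) -/
def barOp : BT k → BT k
  | C b i r s => C (!b) i r s
  | D b i r s => D (!b) i r s
  | M b i r => M (!b) i r
  | x => x

/-- s₀ = C₁₀⁰, s₁ = M₁⁰, s₂ = D₁₀⁰ -/
def sel : Fin 3 → BT k := ![C false 1 false false, M false 1 false, D false 1 false false]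

/-- x ∧ⁱ y = x if x = y ∈ (P ∪ V₁₀⁰) \ {s_i}, else 0. -/
def meetI (i : Fin 3) (x y : BT k) : BT k :=
  if x = y ∧ (isP x ∨ isV10 x) ∧ x ≠ sel i then x else zero

/-- T₀(x) = P₂ if x ∈ {P₀,P₂}; P₀ if x = P₁; x if x ∈ V₀; else 0. -/
def T0 : BT k → BT k
  | P j => if j = 1 then P 0 else P 2
  | C false i r s => if i = 0 then C false i r s else zero
  | D false i r s => if i = 0 then D false i r s else zero
  | M false i r => if i = 0 then M false i r else zero
  | _ => zero

/-- T₁(x,y). -/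
def T1 (x y : BT k) : BT k :=
  if (x = P 0 ∧ y = P 0) ∨ (x = P 0 ∧ y = P 1) ∨ (x = P 1 ∧ y = P 0) ∨
     (x = P 0 ∧ y = P 2) ∨ (x = P 2 ∧ y = P 0) then P 1
  else if (x = P 1 ∨ x = P 2) ∧ (y = P 1 ∨ y = P 2) then P 2
  else if x = y ∧ isV10 x then x
  else zero

/-- J′(x,y,z) = x ∧ z if x = y or {x,y} ⊆ P; x if x = ȳ ∈ V ∪ V̄; else 0. -/
def J' (x y z : BT k) : BT k :=
  if x = y ∨ (isP x ∧ isP y) then meet x z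
  else if isVV y ∧ x = barOp y then x
  else zero

/-- the ternary discriminator: t(x,y,z) = z if x = y, else x. -/
def disc (x y z : BT k) : BT k := if x = y then z else x

/-- S₁(u,x,y,z). -/
def S1 (u x y z : BT k) : BT k :=
  if (u = one ∨ u = two) ∧ x = y ∧ y = z ∧ isUVV x then x
  else if isP x ∧ isP y ∧ isP z then disc x y z
  else zero

/-- S₂(u,v,x,y,z). -/
def S2 (u v x y z : BT k) : BT k :=
  if isVV v ∧ u = barOp v ∧ x = y ∧ y = z ∧ isVV x then x
  else if isP x ∧ isP y ∧ isP z then disc x y z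
  else zero

/-- L_{irt} for the instruction μ_i r s L μ_m (the barred clause is handled by carrying
the bar `b` of the argument through). -/
def Lop (i : Fin (k + 1)) (r s : Bool) (m : Fin (k + 1)) (t : Bool) :
    BT k → BT k → BT k → BT k := fun x y u =>
  match u with
  | P j => if x = one ∧ y = one then P j else zero
  | C b i' r' s' =>
      if x = one ∧ y = one ∧ i' = i ∧ r' = r then C b m t s'
      else if x = H ∧ y = one ∧ i' = i ∧ r' = r ∧ s' = t then M b m t
      else zero
  | M b i' r' => if x = two ∧ y = H ∧ i' = i ∧ r' = r then D b m t s else zero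
  | D b i' r' s' => if x = two ∧ y = two ∧ i' = i ∧ r' = r then D b m t s' else zero
  | _ => zero

/-- R_{irt} for the instruction μ_i r s R μ_m. -/
def Rop (i : Fin (k + 1)) (r s : Bool) (m : Fin (k + 1)) (t : Bool) :
    BT k → BT k → BT k → BT k := fun x y u =>
  match u with
  | P j => if x = one ∧ y = one then P j else zero
  | C b i' r' s' => if x = one ∧ y = one ∧ i' = i ∧ r' = r then C b m t s' else zero
  | M b i' r' => if x = H ∧ y = one ∧ i' = i ∧ r' = r then C b m t s else zero
  | D b i' r' s' =>
      if x = two ∧ y = H ∧ i' = i ∧ r' = r ∧ s' = t then M b m t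
      else if x = two ∧ y = two ∧ i' = i ∧ r' = r then D b m t s'
      else zero
  | _ => zero

end BT

/-- The forward machine operation determined by the unique instruction of T beginning
with μ_i r (for 1 ≤ i ≤ k) and the symbol t. -/
def fwd {k : ℕ} (T : TM k) (i : Fin (k + 1)) (r t : Bool) :
    BT k → BT k → BT k → BT k :=
  match T.instr i r with
  | (s, Dir.L, m) => BT.Lop i r s m t
  | (s, Dir.R, m) => BT.Rop i r s m t

/-- the reverse of a machine operation: F°(x,y,u) = v when F(x,y,v) = u ≠ 0, else 0. -/
noncomputable def revOp {k : ℕ} (F : BT k → BT k → BT k → BT k) (x y u : BT k) : BT k :=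
  haveI := Classical.propDecidable (u ≠ BT.zero ∧ ∃ v, F x y v = u)
  if h : u ≠ BT.zero ∧ ∃ v, F x y v = u then h.2.choose else BT.zero

/-- The machine operations ℳ: `b = false` gives the forward operation, `b = true` the
reverse operation. -/
noncomputable def mop {k : ℕ} (T : TM k) (i : Fin (k + 1)) (r t : Bool) (b : Bool) :
    BT k → BT k → BT k → BT k :=
  match b with
  | false => fwd T i r t
  | true => revOp (fwd T i r t)

/-- The relation ≺ on U: 2≺2, 2≺H, H≺1, 1≺1. -/
def prec {k : ℕ} : BT k → BT k → Bool
  | BT.two, BT.two => true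
  | BT.two, BT.H => true
  | BT.H, BT.one => true
  | BT.one, BT.one => true
  | _, _ => false

/-- U_i¹ built from the machine operation F. -/
def U1op {k : ℕ} (F : BT k → BT k → BT k → BT k) (x y z u : BT k) : BT k :=
  if prec x y ∧ prec x z ∧ y ≠ z ∧ BT.isVV (F x y u) then BT.barOp (F x y u)
  else if prec x y ∧ y = z then F x y u
  else BT.zero

/-- U_i² built from the machine operation F. -/
def U2op {k : ℕ} (F : BT k → BT k → BT k → BT k) (x y z u : BT k) : BT k :=
  if prec x z ∧ prec y z ∧ x ≠ y ∧ BT.isVV (F y z u) then BT.barOp (F y z u)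
  else if x = y ∧ prec y z then F y z u
  else BT.zero

/-- The n-ary polynomials of the algebra B(T): functions obtained by composing the basic
operations (the constant 0, T₀, T₁, ∧, ∧⁰, ∧¹, ∧², J′, S₁, S₂, the forward and reverse
machine operations, and the U_i¹, U_i²), coordinate projections and constants. -/
inductive PolyB {k : ℕ} (T : TM k) : {n : ℕ} → ((Fin n → BT k) → BT k) → Prop where
  | proj {n : ℕ} (i : Fin n) : PolyB T fun v => v i
  | const {n : ℕ} (c : BT k) : PolyB T fun _ : Fin n → BT k => c
  | t0 {n : ℕ} {p : (Fin n → BT k) → BT k} :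
      PolyB T p → PolyB T fun v => BT.T0 (p v)
  | t1 {n : ℕ} {p q : (Fin n → BT k) → BT k} :
      PolyB T p → PolyB T q → PolyB T fun v => BT.T1 (p v) (q v)
  | meet {n : ℕ} {p q : (Fin n → BT k) → BT k} :
      PolyB T p → PolyB T q → PolyB T fun v => BT.meet (p v) (q v)
  | meetI (j : Fin 3) {n : ℕ} {p q : (Fin n → BT k) → BT k} :
      PolyB T p → PolyB T q → PolyB T fun v => BT.meetI j (p v) (q v)
  | jop {n : ℕ} {p q r : (Fin n → BT k) → BT k} :
      PolyB T p → PolyB T q → PolyB T r → PolyB T fun v => BT.J' (p v) (q v) (r v)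
  | s1 {n : ℕ} {p q r s : (Fin n → BT k) → BT k} :
      PolyB T p → PolyB T q → PolyB T r → PolyB T s →
      PolyB T fun v => BT.S1 (p v) (q v) (r v) (s v)
  | s2 {n : ℕ} {p q r s w : (Fin n → BT k) → BT k} :
      PolyB T p → PolyB T q → PolyB T r → PolyB T s → PolyB T w →
      PolyB T fun v => BT.S2 (p v) (q v) (r v) (s v) (w v)
  | mach (i : Fin (k + 1)) (hi : i ≠ 0) (r t b : Bool) {n : ℕ}
      {p q u : (Fin n → BT k) → BT k} :
      PolyB T p → PolyB T q → PolyB T u →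
      PolyB T fun v => mop T i r t b (p v) (q v) (u v)
  | u1 (i : Fin (k + 1)) (hi : i ≠ 0) (r t b : Bool) {n : ℕ}
      {p q r' s : (Fin n → BT k) → BT k} :
      PolyB T p → PolyB T q → PolyB T r' → PolyB T s →
      PolyB T fun v => U1op (mop T i r t b) (p v) (q v) (r' v) (s v)
  | u2 (i : Fin (k + 1)) (hi : i ≠ 0) (r t b : Bool) {n : ℕ}
      {p q r' s : (Fin n → BT k) → BT k} :
      PolyB T p → PolyB T q → PolyB T r' → PolyB T s →
      PolyB T fun v => U2op (mop T i r t b) (p v) (q v) (r' v) (s v)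

/-- unary polynomials of B(T) -/
def UPolyB {k : ℕ} (T : TM k) (F : BT k → BT k) : Prop :=
  PolyB T (n := 1) fun v => F (v 0)

/-- binary polynomials of B(T) -/
def BPolyB {k : ℕ} (T : TM k) (F : BT k → BT k → BT k) : Prop :=
  PolyB T (n := 2) fun v => F (v 0) (v 1)

/-- A Turing machine configuration ⟨tape, head position, state⟩. -/
structure Cfg (k : ℕ) : Type where
  tape : ℤ → Bool
  pos : ℤ
  state : Fin (k + 1)

/-- One computation step of T (halted configurations, in state μ₀, are fixed). -/
def cfgStep {k : ℕ} (T : TM k) (c : Cfg k) : Cfg k :=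
  if c.state = 0 then c
  else
    match T.instr c.state (c.tape c.pos) with
    | (s, Dir.L, m) => ⟨Function.update c.tape c.pos s, c.pos - 1, m⟩
    | (s, Dir.R, m) => ⟨Function.update c.tape c.pos s, c.pos + 1, m⟩

/-- The initial configuration Q₀ = ⟨t₀, 0, μ₁⟩, t₀ the all-zero tape. -/
def Q0 (k : ℕ) : Cfg k := ⟨fun _ => false, 0, 1⟩

/-- N = {n₀,…,n_m} ∪ {−1,0,1}: the squares visited during the halting computation
Q₀, …, Q_m, together with −1, 0, 1. -/
def Nset {k : ℕ} (T : TM k) (m : ℕ) : Finset ℤ :=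
  ((Finset.range (m + 1)).image fun j => ((cfgStep T)^[j] (Q0 k)).pos) ∪ {-1, 0, 1}

/-- The universe of the direct power A = B(T)^Y, where Y = {s₀} ∪ N: the coordinate
`none` is the extra coordinate s₀ ∉ N, and `some x` the coordinate x ∈ N. -/
abbrev AA {k : ℕ} (T : TM k) (m : ℕ) : Type := Option {x : ℤ // x ∈ Nset T m} → BT k

/-- The sequential generator a_n (n ∈ N). -/
def aEl {k : ℕ} (T : TM k) (m : ℕ) (n : ℤ) : AA T m := fun y =>
  match y with
  | none => BT.one
  | some x => if x.1 < n then BT.one else if x.1 = n then BT.H else BT.two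

/-- The generator q^j (j ∈ {0,1,2}). -/
def qEl {k : ℕ} (T : TM k) (m : ℕ) (j : Fin 3) : AA T m := fun y =>
  match y with
  | none => BT.P j
  | some x =>
      if x.1 < 0 then BT.C false 1 false false
      else if x.1 = 0 then BT.M false 1 false
      else BT.D false 1 false false

/-- K: the subalgebra of A = B(T)^Y generated by S ∪ {q⁰,q¹,q²}
(operations computed coordinatewise). -/
inductive InK {k : ℕ} (T : TM k) (m : ℕ) : AA T m → Prop where
  | gen_a (n : ℤ) (hn : n ∈ Nset T m) : InK T m (aEl T m n)
  | gen_q (j : Fin 3) : InK T m (qEl T m j)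
  | zeroOp : InK T m fun _ => BT.zero
  | t0 {f : AA T m} : InK T m f → InK T m fun y => BT.T0 (f y)
  | t1 {f g : AA T m} : InK T m f → InK T m g → InK T m fun y => BT.T1 (f y) (g y)
  | meet {f g : AA T m} : InK T m f → InK T m g → InK T m fun y => BT.meet (f y) (g y)
  | meetI (j : Fin 3) {f g : AA T m} :
      InK T m f → InK T m g → InK T m fun y => BT.meetI j (f y) (g y)
  | jop {f g h : AA T m} : InK T m f → InK T m g → InK T m h →
      InK T m fun y => BT.J' (f y) (g y) (h y)
  | s1 {f g h p : AA T m} : InK T m f → InK T m g → InK T m h → InK T m p →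
      InK T m fun y => BT.S1 (f y) (g y) (h y) (p y)
  | s2 {f g h p q : AA T m} : InK T m f → InK T m g → InK T m h → InK T m p → InK T m q →
      InK T m fun y => BT.S2 (f y) (g y) (h y) (p y) (q y)
  | mach (i : Fin (k + 1)) (hi : i ≠ 0) (r t b : Bool) {f g h : AA T m} :
      InK T m f → InK T m g → InK T m h →
      InK T m fun y => mop T i r t b (f y) (g y) (h y)
  | u1 (i : Fin (k + 1)) (hi : i ≠ 0) (r t b : Bool) {f g h p : AA T m} :
      InK T m f → InK T m g → InK T m h → InK T m p →
      InK T m fun y => U1op (mop T i r t b) (f y) (g y) (h y) (p y)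
  | u2 (i : Fin (k + 1)) (hi : i ≠ 0) (r t b : Bool) {f g h p : AA T m} :
      InK T m f → InK T m g → InK T m h → InK T m p →
      InK T m fun y => U2op (mop T i r t b) (f y) (g y) (h y) (p y)

/-- The n-ary polynomials of the algebra K: compositions of the basic operations
(computed coordinatewise), coordinate projections, and constants from K. -/
inductive PolyK {k : ℕ} (T : TM k) (m : ℕ) :
    {n : ℕ} → ((Fin n → AA T m) → AA T m) → Prop where
  | proj {n : ℕ} (i : Fin n) : PolyK T m fun v => v i
  | const {n : ℕ} (c : AA T m) (hc : InK T m c) : PolyK T m fun _ : Fin n → AA T m => c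
  | zeroOp {n : ℕ} : PolyK T m fun (_ : Fin n → AA T m) _ => BT.zero
  | t0 {n : ℕ} {p : (Fin n → AA T m) → AA T m} :
      PolyK T m p → PolyK T m fun v y => BT.T0 (p v y)
  | t1 {n : ℕ} {p q : (Fin n → AA T m) → AA T m} :
      PolyK T m p → PolyK T m q → PolyK T m fun v y => BT.T1 (p v y) (q v y)
  | meet {n : ℕ} {p q : (Fin n → AA T m) → AA T m} :
      PolyK T m p → PolyK T m q → PolyK T m fun v y => BT.meet (p v y) (q v y)
  | meetI (j : Fin 3) {n : ℕ} {p q : (Fin n → AA T m) → AA T m} :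
      PolyK T m p → PolyK T m q → PolyK T m fun v y => BT.meetI j (p v y) (q v y)
  | jop {n : ℕ} {p q r : (Fin n → AA T m) → AA T m} :
      PolyK T m p → PolyK T m q → PolyK T m r →
      PolyK T m fun v y => BT.J' (p v y) (q v y) (r v y)
  | s1 {n : ℕ} {p q r s : (Fin n → AA T m) → AA T m} :
      PolyK T m p → PolyK T m q → PolyK T m r → PolyK T m s →
      PolyK T m fun v y => BT.S1 (p v y) (q v y) (r v y) (s v y)
  | s2 {n : ℕ} {p q r s w : (Fin n → AA T m) → AA T m} :
      PolyK T m p → PolyK T m q → PolyK T m r → PolyK T m s → PolyK T m w →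
      PolyK T m fun v y => BT.S2 (p v y) (q v y) (r v y) (s v y) (w v y)
  | mach (i : Fin (k + 1)) (hi : i ≠ 0) (r t b : Bool) {n : ℕ}
      {p q u : (Fin n → AA T m) → AA T m} :
      PolyK T m p → PolyK T m q → PolyK T m u →
      PolyK T m fun v y => mop T i r t b (p v y) (q v y) (u v y)
  | u1 (i : Fin (k + 1)) (hi : i ≠ 0) (r t b : Bool) {n : ℕ}
      {p q r' s : (Fin n → AA T m) → AA T m} :
      PolyK T m p → PolyK T m q → PolyK T m r' → PolyK T m s →
      PolyK T m fun v y => U1op (mop T i r t b) (p v y) (q v y) (r' v y) (s v y)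
  | u2 (i : Fin (k + 1)) (hi : i ≠ 0) (r t b : Bool) {n : ℕ}
      {p q r' s : (Fin n → AA T m) → AA T m} :
      PolyK T m p → PolyK T m q → PolyK T m r' → PolyK T m s →
      PolyK T m fun v y => U2op (mop T i r t b) (p v y) (q v y) (r' v y) (s v y)

/-- unary polynomials of K -/
def UPolyK {k : ℕ} (T : TM k) (m : ℕ) (F : AA T m → AA T m) : Prop :=
  PolyK T m (n := 1) fun v => F (v 0)

/-- binary polynomials of K -/
def BPolyK {k : ℕ} (T : TM k) (m : ℕ) (F : AA T m → AA T m → AA T m) : Prop :=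
  PolyK T m (n := 2) fun v => F (v 0) (v 1)

/-- Q ∈ Cfg⋆: T, started in configuration Q, reaches the halting configuration
Q_m in finitely many steps, the head visiting only squares in N. -/
def InCfgStar {k : ℕ} (T : TM k) (m : ℕ) (Q : Cfg k) : Prop :=
  ∃ j : ℕ, (cfgStep T)^[j] Q = (cfgStep T)^[m] (Q0 k) ∧
    ∀ l ≤ j, ((cfgStep T)^[l] Q).pos ∈ Nset T m

/-- β^j(Q): the encoding of the configuration Q (with P_j in coordinate s₀). -/
def betaEl {k : ℕ} (T : TM k) (m : ℕ) (j : Fin 3) (Q : Cfg k) : AA T m := fun y =>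
  match y with
  | none => BT.P j
  | some x =>
      if x.1 < Q.pos then BT.C false Q.state (Q.tape Q.pos) (Q.tape x.1)
      else if x.1 = Q.pos then BT.M false Q.state (Q.tape Q.pos)
      else BT.D false Q.state (Q.tape Q.pos) (Q.tape x.1)

/-- K₀ = {f ∈ K : f(x) = 0 for some x ∈ N}. -/
def K0 {k : ℕ} (T : TM k) (m : ℕ) : Set (AA T m) :=
  {f | InK T m f ∧ ∃ x : {x : ℤ // x ∈ Nset T m}, f (some x) = BT.zero}

/-- S = {a_n : n ∈ N}. -/
def Sset {k : ℕ} (T : TM k) (m : ℕ) : Set (AA T m) :=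
  {f | ∃ n ∈ Nset T m, f = aEl T m n}

/-- Λ = {β^j(Q) : Q ∈ Cfg⋆, j ∈ {0,1,2}}. -/
def Lam {k : ℕ} (T : TM k) (m : ℕ) : Set (AA T m) :=
  {f | ∃ (j : Fin 3) (Q : Cfg k), InCfgStar T m Q ∧ f = betaEl T m j Q}

/-- θ: (f,g) ∈ θ iff f, g ∈ K and for every unary polynomial F of K,
F(f) = q² ⇔ F(g) = q². -/
def theta {k : ℕ} (T : TM k) (m : ℕ) (f g : AA T m) : Prop :=
  InK T m f ∧ InK T m g ∧
    ∀ F : AA T m → AA T m, UPolyK T m F → (F f = qEl T m 2 ↔ F g = qEl T m 2)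

/-- A congruence of K: an equivalence relation on K preserved by all basic operations. -/
structure IsCongK {k : ℕ} (T : TM k) (m : ℕ) (R : AA T m → AA T m → Prop) : Prop where
  refl : ∀ f, InK T m f → R f f
  symm : ∀ {f g}, R f g → R g f
  trans : ∀ {f g h}, R f g → R g h → R f h
  dom : ∀ {f g}, R f g → InK T m f ∧ InK T m g
  t0 : ∀ {f f'}, R f f' → R (fun y => BT.T0 (f y)) (fun y => BT.T0 (f' y))
  t1 : ∀ {f f' g g'}, R f f' → R g g' →
    R (fun y => BT.T1 (f y) (g y)) (fun y => BT.T1 (f' y) (g' y))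
  meet : ∀ {f f' g g'}, R f f' → R g g' →
    R (fun y => BT.meet (f y) (g y)) (fun y => BT.meet (f' y) (g' y))
  meetI : ∀ (j : Fin 3) {f f' g g'}, R f f' → R g g' →
    R (fun y => BT.meetI j (f y) (g y)) (fun y => BT.meetI j (f' y) (g' y))
  jop : ∀ {f f' g g' h h'}, R f f' → R g g' → R h h' →
    R (fun y => BT.J' (f y) (g y) (h y)) (fun y => BT.J' (f' y) (g' y) (h' y))
  s1 : ∀ {f f' g g' h h' p p'}, R f f' → R g g' → R h h' → R p p' →
    R (fun y => BT.S1 (f y) (g y) (h y) (p y))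
      (fun y => BT.S1 (f' y) (g' y) (h' y) (p' y))
  s2 : ∀ {f f' g g' h h' p p' q q'}, R f f' → R g g' → R h h' → R p p' → R q q' →
    R (fun y => BT.S2 (f y) (g y) (h y) (p y) (q y))
      (fun y => BT.S2 (f' y) (g' y) (h' y) (p' y) (q' y))
  mach : ∀ (i : Fin (k + 1)), i ≠ 0 → ∀ (r t b : Bool) {f f' g g' h h'},
    R f f' → R g g' → R h h' →
    R (fun y => mop T i r t b (f y) (g y) (h y))
      (fun y => mop T i r t b (f' y) (g' y) (h' y))
  u1 : ∀ (i : Fin (k + 1)), i ≠ 0 → ∀ (r t b : Bool) {f f' g g' h h' p p'},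
    R f f' → R g g' → R h h' → R p p' →
    R (fun y => U1op (mop T i r t b) (f y) (g y) (h y) (p y))
      (fun y => U1op (mop T i r t b) (f' y) (g' y) (h' y) (p' y))
  u2 : ∀ (i : Fin (k + 1)), i ≠ 0 → ∀ (r t b : Bool) {f f' g g' h h' p p'},
    R f f' → R g g' → R h h' → R p p' →
    R (fun y => U2op (mop T i r t b) (f y) (g y) (h y) (p y))
      (fun y => U2op (mop T i r t b) (f' y) (g' y) (h' y) (p' y))

/-- θ̄: the smallest congruence of K containing θ ∪ {(q⁰,q²)} (the intersection of all
congruences of K containing θ and (q⁰,q²)). -/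
def thetaBar {k : ℕ} (T : TM k) (m : ℕ) (f g : AA T m) : Prop :=
  InK T m f ∧ InK T m g ∧
    ∀ R : AA T m → AA T m → Prop, IsCongK T m R → (∀ a b, theta T m a b → R a b) →
      R (qEl T m 0) (qEl T m 2) → R f g



/- ===================== auxiliary development ===================== -/

namespace BT
variable {k : ℕ}

/-- barred-ness of an element -/
def isBarB : BT k → Bool
  | C b _ _ _ => b
  | D b _ _ _ => b
  | M b _ _ => b
  | _ => false

lemma isP_iff {a : BT k} : isP a = true ↔ ∃ j, a = P j := by
  cases a <;> simp [isP]

lemma isU_iff {a : BT k} : isU a = true ↔ a = one ∨ a = two ∨ a = H := by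
  cases a <;> simp [isU]

lemma isV10_iff {a : BT k} : isV10 a = true ↔
    a = C false 1 false false ∨ a = M false 1 false ∨ a = D false 1 false false := by
  simp [isV10, or_assoc]

lemma isVV_ne_zero {a : BT k} (h : isVV a = true) : a ≠ zero := by
  cases a <;> simp_all [isVV]

lemma isVV_not_P {a : BT k} (h : isVV a = true) : isP a = false := by
  cases a <;> simp_all [isVV, isP]

lemma isVV_not_U {a : BT k} (h : isVV a = true) : isU a = false := by
  cases a <;> simp_all [isVV, isU]

lemma isU_not_P {a : BT k} (h : isU a = true) : isP a = false := by
  rcases isU_iff.1 h with rfl|rfl|rfl <;> rfl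

lemma isUVV_not_P {a : BT k} (h : isUVV a = true) : isP a = false := by
  cases a <;> simp_all [isUVV, isU, isVV, isP]

lemma isUVV_ne_zero {a : BT k} (h : isUVV a = true) : a ≠ zero := by
  cases a <;> simp_all [isUVV, isU, isVV]

lemma isP_not_bar {a : BT k} (h : isP a = true) : isBarB a = false := by
  rcases isP_iff.1 h with ⟨j, rfl⟩; rfl

lemma isU_not_bar {a : BT k} (h : isU a = true) : isBarB a = false := by
  rcases isU_iff.1 h with rfl|rfl|rfl <;> rfl

lemma isV10_not_bar {a : BT k} (h : isV10 a = true) : isBarB a = false := by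
  rcases isV10_iff.1 h with rfl|rfl|rfl <;> rfl

lemma barOp_ne_zero {a : BT k} (h : isVV a = true) : barOp a ≠ zero := by
  cases a <;> simp_all [isVV, barOp]

lemma isP_barOp {a : BT k} : isP (barOp a) = isP a := by
  cases a <;> simp [barOp, isP]

lemma isU_barOp {a : BT k} : isU (barOp a) = isU a := by
  cases a <;> simp [barOp, isU]

lemma isVV_barOp {a : BT k} : isVV (barOp a) = isVV a := by
  cases a <;> simp [barOp, isVV]

lemma isBar_barOp {b : BT k} (h : isVV b = true) : isBarB (barOp b) = !(isBarB b) := by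
  cases b <;> simp_all [isVV, barOp, isBarB]

lemma bar_cases {a b : BT k} (hb : isVV b = true) (hab : a = barOp b) :
    (isBarB a = true ∧ isVV a = true) ∨ (isBarB b = true) := by
  subst hab
  cases hb2 : isBarB b
  · left
    refine ⟨?_, by rw [isVV_barOp]; exact hb⟩
    rw [isBar_barOp hb, hb2]; rfl
  · right; rfl

/- ---- meet ---- -/

@[simp] lemma meet_self (a : BT k) : meet a a = a := by simp [meet]

@[simp] lemma meet_zero_left (a : BT k) : meet zero a = zero := by
  unfold meet; split_ifs with h1 h2 h3 h4 <;> simp_all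

@[simp] lemma meet_zero_right (a : BT k) : meet a zero = zero := by
  unfold meet; split_ifs with h1 h2 h3 h4 <;> simp_all

lemma meet_ne_zero {a b : BT k} (h : meet a b ≠ zero) : a ≠ zero ∧ b ≠ zero := by
  constructor <;> rintro rfl <;> simp_all

lemma isP_meet {a b : BT k} (h : isP (meet a b) = true) : isP a = true := by
  unfold meet at h; split_ifs at h with h1 h2 h3 h4
  · exact h
  · rcases h2 with ⟨rfl, _⟩; rfl
  · rcases h3 with ⟨_, rfl|rfl⟩ <;> rfl
  · rcases h4 with ⟨rfl|rfl, _⟩ <;> rfl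
  · simp [isP] at h

lemma isU_meet {a b : BT k} (h : isU (meet a b) = true) : b = a ∧ meet a b = a := by
  unfold meet at h; split_ifs at h with h1 h2 h3 h4
  · exact ⟨h1.symm, by simp [meet, h1]⟩
  · simp [isU] at h
  · simp [isU] at h
  · simp [isU] at h
  · simp [isU] at h

lemma isVV_meet {a b : BT k} (h : isVV (meet a b) = true) : b = a ∧ meet a b = a := by
  unfold meet at h; split_ifs at h with h1 h2 h3 h4
  · exact ⟨h1.symm, by simp [meet, h1]⟩
  · simp [isVV] at h
  · simp [isVV] at h
  · simp [isVV] at h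
  · simp [isVV] at h

lemma isBar_meet {a b : BT k} (h : isBarB (meet a b) = true) :
    b = a ∧ meet a b = a := by
  unfold meet at h; split_ifs at h with h1 h2 h3 h4
  · exact ⟨h1.symm, by simp [meet, h1]⟩
  · simp [isBarB] at h
  · simp [isBarB] at h
  · simp [isBarB] at h
  · simp [isBarB] at h

lemma meet_eq_left {a b : BT k} (h : meet a b = a) (hP : isP a = false)
    (hz : a ≠ zero) : b = a := by
  unfold meet at h; split_ifs at h with h1 h2 h3 h4
  · exact h1.symm
  · rcases h2 with ⟨rfl, _⟩; simp [isP] at hP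
  · rcases h3 with ⟨_, h'|h'⟩ <;> (rw [← h] at hP; simp [isP] at hP)
  · rw [← h] at hP; simp [isP] at hP
  · exact absurd h.symm hz

lemma meet_P2_inv {b : BT k} (h : meet (P 2) b = P 2) :
    b = P 0 ∨ b = P 1 ∨ b = P 2 := by
  by_contra hc
  push_neg at hc
  obtain ⟨h0, h1', h2'⟩ := hc
  rw [meet] at h
  split_ifs at h with ha hb hcc hd
  · exact h2' ha.symm
  · rcases hb.2 with h'|h'
    · exact h0 h'
    · exact h1' h'
  · exact h2' hcc.1
  · rcases hd.1 with h'|h' <;> simp at h'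

lemma meet_P2_P (j : Fin 3) : meet (P 2) (P j) = (P 2 : BT k) := by
  fin_cases j <;> simp [meet]

/- ---- T0 ---- -/

lemma isP_T0 {a : BT k} (h : isP (T0 a) = true) : isP a = true := by
  unfold T0 at h
  split at h <;> first | rfl | (split at h <;> simp [isP] at h) | simp [isP] at h

lemma isU_T0 (a : BT k) : isU (T0 a) = false := by
  unfold T0; split <;> first | (split <;> rfl) | rfl

lemma isBar_T0 (a : BT k) : isBarB (T0 a) = false := by
  unfold T0; split <;> first | (split <;> rfl) | rfl

@[simp] lemma T0_zero : T0 (zero : BT k) = zero := rfl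

/- ---- T1 ---- -/

@[simp] lemma T1_zero_left (b : BT k) : T1 zero b = zero := by
  unfold T1; split_ifs with h1 h2 h3 <;> simp_all [isV10]

@[simp] lemma T1_zero_right (a : BT k) : T1 a zero = zero := by
  unfold T1; split_ifs with h1 h2 h3 <;> simp_all [isV10]

lemma isP_T1 {a b : BT k} (h : isP (T1 a b) = true) : isP a = true := by
  unfold T1 at h; split_ifs at h with h1 h2 h3
  · rcases h1 with ⟨rfl,_⟩|⟨rfl,_⟩|⟨rfl,_⟩|⟨rfl,_⟩|⟨rfl,_⟩ <;> rfl
  · rcases h2.1 with rfl|rfl <;> rfl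
  · exact h
  · simp [isP] at h

lemma isU_T1 (a b : BT k) : isU (T1 a b) = false := by
  unfold T1; split_ifs with h1 h2 h3
  · rfl
  · rfl
  · rcases isV10_iff.1 h3.2 with rfl|rfl|rfl <;> rfl
  · rfl

lemma isBar_T1 (a b : BT k) : isBarB (T1 a b) = false := by
  unfold T1; split_ifs with h1 h2 h3
  · rfl
  · rfl
  · rcases isV10_iff.1 h3.2 with rfl|rfl|rfl <;> rfl
  · rfl

/- ---- meetI ---- -/

@[simp] lemma meetI_zero_left (j : Fin 3) (b : BT k) : meetI j zero b = zero := by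
  unfold meetI; split_ifs with h1
  · rfl
  · rfl

@[simp] lemma meetI_zero_right (j : Fin 3) (a : BT k) : meetI j a zero = zero := by
  unfold meetI; split_ifs with h1
  · exact h1.1
  · rfl

lemma isP_meetI {j : Fin 3} {a b : BT k} (h : isP (meetI j a b) = true) :
    isP a = true := by
  unfold meetI at h; split_ifs at h with h1
  · exact h
  · simp [isP] at h

lemma isU_meetI (j : Fin 3) (a b : BT k) : isU (meetI j a b) = false := by
  unfold meetI; split_ifs with h1
  · rcases h1.2.1 with h|h
    · rcases isP_iff.1 h with ⟨j', rfl⟩; rfl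
    · rcases isV10_iff.1 h with rfl|rfl|rfl <;> rfl
  · rfl

lemma isBar_meetI (j : Fin 3) (a b : BT k) : isBarB (meetI j a b) = false := by
  unfold meetI; split_ifs with h1
  · rcases h1.2.1 with h|h
    · exact isP_not_bar h
    · exact isV10_not_bar h
  · rfl

/- ---- J' ---- -/

@[simp] lemma J'_zero_left (b c : BT k) : J' zero b c = zero := by
  unfold J'; split_ifs with h1 h2
  · rcases h1 with h1|h1
    · simp
    · simp [isP] at h1
  · exact absurd h2.2.symm (barOp_ne_zero h2.1)
  · rfl

@[simp] lemma J'_zero_mid (a c : BT k) : J' a zero c = zero := by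
  unfold J'; split_ifs with h1 h2
  · rcases h1 with rfl|h1
    · simp
    · simp [isP] at h1
  · simp [isVV] at h2
  · rfl

@[simp] lemma J'_zero_right (a b : BT k) : J' a b zero = zero ∨ J' a b zero = a := by
  unfold J'; split_ifs with h1 h2
  · left; simp
  · right; rfl
  · left; rfl

lemma J'_ne_zero {a b c : BT k} (h : J' a b c ≠ zero) : a ≠ zero ∧ b ≠ zero := by
  constructor <;> rintro rfl <;> simp_all

lemma isP_J' {a b c : BT k} (h : isP (J' a b c) = true) : isP a = true := by
  unfold J' at h; split_ifs at h with h1 h2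
  · exact isP_meet h
  · exact h
  · simp [isP] at h

lemma isU_J' {a b c : BT k} (h : isU (J' a b c) = true) :
    a = b ∧ c = a ∧ J' a b c = a := by
  unfold J' at h
  split_ifs at h with h1 h2
  · obtain ⟨hca, hma⟩ := isU_meet h
    have hU : isU a = true := by rw [← hma]; exact h
    have hab : a = b := by
      rcases h1 with h1|h1
      · exact h1
      · rw [isU_not_P hU] at h1; simp at h1
    refine ⟨hab, hca, ?_⟩
    unfold J'; rw [if_pos h1]; exact hma
  · have hVV : isVV a = true := by rw [h2.2, isVV_barOp]; exact h2.1
    rw [isVV_not_U hVV] at h; simp at h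
  · simp [isU] at h

lemma isBar_J' {a b c : BT k} (h : isBarB (J' a b c) = true) : isBarB a = true := by
  unfold J' at h; split_ifs at h with h1 h2
  · obtain ⟨_, hma⟩ := isBar_meet h; rw [hma] at h; exact h
  · exact h
  · simp [isBarB] at h

/- ---- disc ---- -/

lemma isP_disc {a b c : BT k} (ha : isP a = true) (hc : isP c = true) :
    isP (disc a b c) = true := by
  unfold disc; split_ifs <;> assumption

lemma disc_self_right (a b : BT k) : disc a b b = a := by
  unfold disc; split_ifs with h <;> simp [h]

/- ---- S1 ---- -/

lemma isP_S1 {u a b c : BT k} (h : isP (S1 u a b c) = true) : isP a = true := by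
  unfold S1 at h; split_ifs at h with h1 h2
  · exact h
  · exact h2.1
  · simp [isP] at h

lemma isU_S1 {u a b c : BT k} (h : isU (S1 u a b c) = true) :
    (u = one ∨ u = two) ∧ a = b ∧ b = c ∧ S1 u a b c = a := by
  unfold S1 at h
  split_ifs at h with h1 h2
  · exact ⟨h1.1, h1.2.1, h1.2.2.1, by unfold S1; rw [if_pos h1]⟩
  · unfold disc at h; split_ifs at h
    · rcases isP_iff.1 h2.2.2 with ⟨j, rfl⟩; simp [isU] at h
    · rcases isP_iff.1 h2.1 with ⟨j, rfl⟩; simp [isU] at h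
  · simp [isU] at h

lemma S1_ne_zero {u a b c : BT k} (h : S1 u a b c ≠ zero) : a ≠ zero := by
  rintro rfl
  unfold S1 at h
  split_ifs at h with h1 h2
  · exact h rfl
  · simp [isP] at h2
  · exact h rfl

lemma isBar_S1 {u a b c : BT k} (h : isBarB (S1 u a b c) = true) :
    isBarB a = true := by
  unfold S1 at h; split_ifs at h with h1 h2
  · exact h
  · unfold disc at h; split_ifs at h
    · rw [isP_not_bar h2.2.2] at h; simp at h
    · rw [isP_not_bar h2.1] at h; simp at h
  · simp [isBarB] at h

/- ---- S2 ---- -/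

lemma isP_S2 {u v a b c : BT k} (h : isP (S2 u v a b c) = true) : isP a = true := by
  unfold S2 at h; split_ifs at h with h1 h2
  · exact h
  · exact h2.1
  · simp [isP] at h

lemma isU_S2 (u v a b c : BT k) : isU (S2 u v a b c) = false := by
  unfold S2; split_ifs with h1 h2
  · exact isVV_not_U h1.2.2.2.2
  · unfold disc; split_ifs
    · rcases isP_iff.1 h2.2.2 with ⟨j, rfl⟩; rfl
    · rcases isP_iff.1 h2.1 with ⟨j, rfl⟩; rfl
  · rfl

lemma S2_ne_zero {u v a b c : BT k} (h : S2 u v a b c ≠ zero) : a ≠ zero := by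
  rintro rfl
  unfold S2 at h
  split_ifs at h with h1 h2
  · exact h rfl
  · simp [isP] at h2
  · exact h rfl

lemma isBar_S2 {u v a b c : BT k} (h : isBarB (S2 u v a b c) = true) :
    isBarB a = true := by
  unfold S2 at h; split_ifs at h with h1 h2
  · exact h
  · unfold disc at h; split_ifs at h
    · rw [isP_not_bar h2.2.2] at h; simp at h
    · rw [isP_not_bar h2.1] at h; simp at h
  · simp [isBarB] at h

end BT


namespace BT
variable {k : ℕ}

/- ---- Lop/Rop ---- -/

@[simp] lemma Lop_zero_u (i : Fin (k+1)) (r s : Bool) (mm : Fin (k+1)) (t : Bool)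
    (x y : BT k) : Lop i r s mm t x y zero = zero := rfl

@[simp] lemma Rop_zero_u (i : Fin (k+1)) (r s : Bool) (mm : Fin (k+1)) (t : Bool)
    (x y : BT k) : Rop i r s mm t x y zero = zero := rfl

@[simp] lemma Lop_zero_x (i : Fin (k+1)) (r s : Bool) (mm : Fin (k+1)) (t : Bool)
    (y u : BT k) : Lop i r s mm t zero y u = zero := by
  cases u <;> unfold Lop <;> (repeat' split) <;> simp_all

@[simp] lemma Rop_zero_x (i : Fin (k+1)) (r s : Bool) (mm : Fin (k+1)) (t : Bool)
    (y u : BT k) : Rop i r s mm t zero y u = zero := by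
  cases u <;> unfold Rop <;> (repeat' split) <;> simp_all

@[simp] lemma Lop_zero_y (i : Fin (k+1)) (r s : Bool) (mm : Fin (k+1)) (t : Bool)
    (x u : BT k) : Lop i r s mm t x zero u = zero := by
  cases u <;> unfold Lop <;> (repeat' split) <;> simp_all

@[simp] lemma Rop_zero_y (i : Fin (k+1)) (r s : Bool) (mm : Fin (k+1)) (t : Bool)
    (x u : BT k) : Rop i r s mm t x zero u = zero := by
  cases u <;> unfold Rop <;> (repeat' split) <;> simp_all

lemma Lop_eq_P {i : Fin (k+1)} {r s : Bool} {mm : Fin (k+1)} {t : Bool}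
    {x y u : BT k} {j : Fin 3} (h : Lop i r s mm t x y u = P j) : u = P j := by
  cases u <;> unfold Lop at h <;> (repeat' split at h) <;> simp_all

lemma Rop_eq_P {i : Fin (k+1)} {r s : Bool} {mm : Fin (k+1)} {t : Bool}
    {x y u : BT k} {j : Fin 3} (h : Rop i r s mm t x y u = P j) : u = P j := by
  cases u <;> unfold Rop at h <;> (repeat' split at h) <;> simp_all

lemma isP_Lop {i : Fin (k+1)} {r s : Bool} {mm : Fin (k+1)} {t : Bool}
    {x y u : BT k} (h : isP (Lop i r s mm t x y u) = true) : isP u = true := by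
  rcases isP_iff.1 h with ⟨j, hj⟩
  rw [Lop_eq_P hj]; rfl

lemma isP_Rop {i : Fin (k+1)} {r s : Bool} {mm : Fin (k+1)} {t : Bool}
    {x y u : BT k} (h : isP (Rop i r s mm t x y u) = true) : isP u = true := by
  rcases isP_iff.1 h with ⟨j, hj⟩
  rw [Rop_eq_P hj]; rfl

lemma isU_Lop (i : Fin (k+1)) (r s : Bool) (mm : Fin (k+1)) (t : Bool)
    (x y u : BT k) : isU (Lop i r s mm t x y u) = false := by
  cases u <;> unfold Lop <;> (repeat' split) <;> rfl

lemma isU_Rop (i : Fin (k+1)) (r s : Bool) (mm : Fin (k+1)) (t : Bool)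
    (x y u : BT k) : isU (Rop i r s mm t x y u) = false := by
  cases u <;> unfold Rop <;> (repeat' split) <;> rfl

lemma isBar_Lop {i : Fin (k+1)} {r s : Bool} {mm : Fin (k+1)} {t : Bool}
    {x y u : BT k} (h : isBarB (Lop i r s mm t x y u) = true) : isBarB u = true := by
  cases u <;> unfold Lop at h <;> (repeat' split at h) <;> simp_all [isBarB]

lemma isBar_Rop {i : Fin (k+1)} {r s : Bool} {mm : Fin (k+1)} {t : Bool}
    {x y u : BT k} (h : isBarB (Rop i r s mm t x y u) = true) : isBarB u = true := by
  cases u <;> unfold Rop at h <;> (repeat' split at h) <;> simp_all [isBarB]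

lemma Lop_bar_in {i : Fin (k+1)} {r s : Bool} {mm : Fin (k+1)} {t : Bool}
    {x y u : BT k} (h : isBarB u = true) :
    Lop i r s mm t x y u = zero ∨ isBarB (Lop i r s mm t x y u) = true := by
  cases u <;> unfold Lop <;> (repeat' split) <;> simp_all [isBarB]

lemma Rop_bar_in {i : Fin (k+1)} {r s : Bool} {mm : Fin (k+1)} {t : Bool}
    {x y u : BT k} (h : isBarB u = true) :
    Rop i r s mm t x y u = zero ∨ isBarB (Rop i r s mm t x y u) = true := by
  cases u <;> unfold Rop <;> (repeat' split) <;> simp_all [isBarB]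

lemma Lop_U_in {i : Fin (k+1)} {r s : Bool} {mm : Fin (k+1)} {t : Bool}
    {x y u : BT k} (h : isU u = true) : Lop i r s mm t x y u = zero := by
  rcases isU_iff.1 h with rfl|rfl|rfl <;> rfl

lemma Rop_U_in {i : Fin (k+1)} {r s : Bool} {mm : Fin (k+1)} {t : Bool}
    {x y u : BT k} (h : isU u = true) : Rop i r s mm t x y u = zero := by
  rcases isU_iff.1 h with rfl|rfl|rfl <;> rfl

lemma Lop_ne_zero {i : Fin (k+1)} {r s : Bool} {mm : Fin (k+1)} {t : Bool}
    {x y u : BT k} (h : Lop i r s mm t x y u ≠ zero) : u ≠ zero := by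
  rintro rfl; exact h rfl

lemma Rop_ne_zero {i : Fin (k+1)} {r s : Bool} {mm : Fin (k+1)} {t : Bool}
    {x y u : BT k} (h : Rop i r s mm t x y u ≠ zero) : u ≠ zero := by
  rintro rfl; exact h rfl

lemma Lop_P_in (i : Fin (k+1)) (r s : Bool) (mm : Fin (k+1)) (t : Bool)
    (x y : BT k) (j : Fin 3) :
    Lop i r s mm t x y (P j) = P j ∨ Lop i r s mm t x y (P j) = zero := by
  unfold Lop; split_ifs <;> simp

lemma Rop_P_in (i : Fin (k+1)) (r s : Bool) (mm : Fin (k+1)) (t : Bool)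
    (x y : BT k) (j : Fin 3) :
    Rop i r s mm t x y (P j) = P j ∨ Rop i r s mm t x y (P j) = zero := by
  unfold Rop; split_ifs <;> simp

end BT

section AuxK
variable {k : ℕ}

/- ---- fwd ---- -/

lemma fwd_eq_cases (T : TM k) (i : Fin (k+1)) (r t : Bool) :
    (∃ s mm, fwd T i r t = BT.Lop i r s mm t) ∨
    (∃ s mm, fwd T i r t = BT.Rop i r s mm t) := by
  rcases hI : T.instr i r with ⟨s, D, mm⟩
  cases D
  · left; exact ⟨s, mm, by unfold fwd; rw [hI]⟩
  · right; exact ⟨s, mm, by unfold fwd; rw [hI]⟩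

@[simp] lemma fwd_zero_u (T : TM k) (i : Fin (k+1)) (r t : Bool) (x y : BT k) :
    fwd T i r t x y BT.zero = BT.zero := by
  rcases fwd_eq_cases T i r t with ⟨s, mm, hE⟩ | ⟨s, mm, hE⟩ <;> rw [hE] <;> simp

@[simp] lemma fwd_zero_x (T : TM k) (i : Fin (k+1)) (r t : Bool) (y u : BT k) :
    fwd T i r t BT.zero y u = BT.zero := by
  rcases fwd_eq_cases T i r t with ⟨s, mm, hE⟩ | ⟨s, mm, hE⟩ <;> rw [hE] <;> simp

@[simp] lemma fwd_zero_y (T : TM k) (i : Fin (k+1)) (r t : Bool) (x u : BT k) :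
    fwd T i r t x BT.zero u = BT.zero := by
  rcases fwd_eq_cases T i r t with ⟨s, mm, hE⟩ | ⟨s, mm, hE⟩ <;> rw [hE] <;> simp

lemma fwd_eq_P {T : TM k} {i : Fin (k+1)} {r t : Bool} {x y u : BT k} {j : Fin 3}
    (h : fwd T i r t x y u = BT.P j) : u = BT.P j := by
  rcases fwd_eq_cases T i r t with ⟨s, mm, hE⟩ | ⟨s, mm, hE⟩ <;> rw [hE] at h
  · exact BT.Lop_eq_P h
  · exact BT.Rop_eq_P h

lemma isP_fwd {T : TM k} {i : Fin (k+1)} {r t : Bool} {x y u : BT k}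
    (h : BT.isP (fwd T i r t x y u) = true) : BT.isP u = true := by
  rcases BT.isP_iff.1 h with ⟨j, hj⟩
  rw [fwd_eq_P hj]; rfl

lemma isU_fwd (T : TM k) (i : Fin (k+1)) (r t : Bool) (x y u : BT k) :
    BT.isU (fwd T i r t x y u) = false := by
  rcases fwd_eq_cases T i r t with ⟨s, mm, hE⟩ | ⟨s, mm, hE⟩ <;> rw [hE]
  · exact BT.isU_Lop _ _ _ _ _ _ _ _
  · exact BT.isU_Rop _ _ _ _ _ _ _ _

lemma isBar_fwd {T : TM k} {i : Fin (k+1)} {r t : Bool} {x y u : BT k}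
    (h : BT.isBarB (fwd T i r t x y u) = true) : BT.isBarB u = true := by
  rcases fwd_eq_cases T i r t with ⟨s, mm, hE⟩ | ⟨s, mm, hE⟩ <;> rw [hE] at h
  · exact BT.isBar_Lop h
  · exact BT.isBar_Rop h

lemma fwd_bar_in {T : TM k} {i : Fin (k+1)} {r t : Bool} {x y u : BT k}
    (h : BT.isBarB u = true) :
    fwd T i r t x y u = BT.zero ∨ BT.isBarB (fwd T i r t x y u) = true := by
  rcases fwd_eq_cases T i r t with ⟨s, mm, hE⟩ | ⟨s, mm, hE⟩ <;> rw [hE]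
  · exact BT.Lop_bar_in h
  · exact BT.Rop_bar_in h

lemma fwd_U_in {T : TM k} {i : Fin (k+1)} {r t : Bool} {x y u : BT k}
    (h : BT.isU u = true) : fwd T i r t x y u = BT.zero := by
  rcases fwd_eq_cases T i r t with ⟨s, mm, hE⟩ | ⟨s, mm, hE⟩ <;> rw [hE]
  · exact BT.Lop_U_in h
  · exact BT.Rop_U_in h

lemma fwd_P_in (T : TM k) (i : Fin (k+1)) (r t : Bool) (x y : BT k) (j : Fin 3) :
    fwd T i r t x y (BT.P j) = BT.P j ∨ fwd T i r t x y (BT.P j) = BT.zero := by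
  rcases fwd_eq_cases T i r t with ⟨s, mm, hE⟩ | ⟨s, mm, hE⟩ <;> rw [hE]
  · exact BT.Lop_P_in _ _ _ _ _ _ _ _
  · exact BT.Rop_P_in _ _ _ _ _ _ _ _

lemma fwd_ne_zero {T : TM k} {i : Fin (k+1)} {r t : Bool} {x y u : BT k}
    (h : fwd T i r t x y u ≠ BT.zero) : u ≠ BT.zero := by
  rintro rfl; simp at h

/- ---- revOp ---- -/

lemma revOp_eq {F : BT k → BT k → BT k → BT k} {x y u v : BT k}
    (h1 : F x y v = u) (h2 : u ≠ BT.zero) (h3 : ∀ v', F x y v' = u → v' = v) :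
    revOp F x y u = v := by
  unfold revOp
  have hex : u ≠ BT.zero ∧ ∃ v', F x y v' = u := ⟨h2, v, h1⟩
  rw [dif_pos hex]
  exact h3 _ hex.2.choose_spec

@[simp] lemma revOp_zero_u (F : BT k → BT k → BT k → BT k) (x y : BT k) :
    revOp F x y BT.zero = BT.zero := by
  unfold revOp
  rw [dif_neg]
  rintro ⟨h, -⟩; exact h rfl

lemma revOp_cases (F : BT k → BT k → BT k → BT k) (x y u : BT k) :
    revOp F x y u = BT.zero ∨ (u ≠ BT.zero ∧ F x y (revOp F x y u) = u) := by
  unfold revOp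
  by_cases hc : u ≠ BT.zero ∧ ∃ v, F x y v = u
  · right
    rw [dif_pos hc]
    exact ⟨hc.1, hc.2.choose_spec⟩
  · left; rw [dif_neg hc]

/- ---- mop ---- -/

lemma mop_false (T : TM k) (i : Fin (k+1)) (r t : Bool) :
    mop T i r t false = fwd T i r t := rfl

lemma mop_true (T : TM k) (i : Fin (k+1)) (r t : Bool) :
    mop T i r t true = revOp (fwd T i r t) := rfl

@[simp] lemma mop_zero_u (T : TM k) (i : Fin (k+1)) (r t b : Bool) (x y : BT k) :
    mop T i r t b x y BT.zero = BT.zero := by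
  cases b <;> simp [mop]

@[simp] lemma mop_zero_x (T : TM k) (i : Fin (k+1)) (r t b : Bool) (y u : BT k) :
    mop T i r t b BT.zero y u = BT.zero := by
  cases b
  · simp [mop]
  · show revOp (fwd T i r t) BT.zero y u = BT.zero
    rcases revOp_cases (fwd T i r t) BT.zero y u with h | ⟨h1, h2⟩
    · exact h
    · simp at h2; exact absurd h2.symm h1

@[simp] lemma mop_zero_y (T : TM k) (i : Fin (k+1)) (r t b : Bool) (x u : BT k) :
    mop T i r t b x BT.zero u = BT.zero := by
  cases b
  · simp [mop]
  · show revOp (fwd T i r t) x BT.zero u = BT.zero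
    rcases revOp_cases (fwd T i r t) x BT.zero u with h | ⟨h1, h2⟩
    · exact h
    · simp at h2; exact absurd h2.symm h1

lemma mop_ne_zero {T : TM k} {i : Fin (k+1)} {r t b : Bool} {x y u : BT k}
    (h : mop T i r t b x y u ≠ BT.zero) : u ≠ BT.zero := by
  rintro rfl; simp at h

lemma isP_mop {T : TM k} {i : Fin (k+1)} {r t b : Bool} {x y u : BT k}
    (h : BT.isP (mop T i r t b x y u) = true) : BT.isP u = true := by
  cases b
  · exact isP_fwd h
  · rcases revOp_cases (fwd T i r t) x y u with h0 | ⟨h1, h2⟩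
    · rw [mop_true] at h; rw [h0] at h; simp [BT.isP] at h
    · rw [mop_true] at h
      rcases BT.isP_iff.1 h with ⟨j, hj⟩
      rw [hj] at h2
      rcases fwd_P_in T i r t x y j with h3 | h3
      · rw [h3] at h2; rw [← h2]; rfl
      · rw [h3] at h2; exact absurd h2.symm h1

lemma isU_mop {T : TM k} {i : Fin (k+1)} {r t b : Bool} {x y u : BT k}
    (h : BT.isU (mop T i r t b x y u) = true) : False := by
  cases b
  · rw [mop_false] at h; rw [isU_fwd] at h; simp at h
  · rw [mop_true] at h
    rcases revOp_cases (fwd T i r t) x y u with h0 | ⟨h1, h2⟩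
    · rw [h0] at h; simp [BT.isU] at h
    · rw [fwd_U_in h] at h2; exact h1 h2.symm

lemma isBar_mop {T : TM k} {i : Fin (k+1)} {r t b : Bool} {x y u : BT k}
    (h : BT.isBarB (mop T i r t b x y u) = true) : BT.isBarB u = true := by
  cases b
  · exact isBar_fwd h
  · rw [mop_true] at h
    rcases revOp_cases (fwd T i r t) x y u with h0 | ⟨h1, h2⟩
    · rw [h0] at h; simp [BT.isBarB] at h
    · rcases fwd_bar_in h with h3 | h3
      · exact absurd (h3 ▸ h2).symm h1
      · rw [h2] at h3; exact h3

end AuxK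


section AuxK2
variable {k : ℕ}

/- ---- prec ---- -/

lemma prec_isU {a b : BT k} (h : prec a b = true) :
    BT.isU a = true ∧ BT.isU b = true := by
  cases a <;> cases b <;> simp_all [prec, BT.isU]

lemma prec_iff {a b : BT k} : prec a b = true ↔
    (a = BT.two ∧ b = BT.two) ∨ (a = BT.two ∧ b = BT.H) ∨
    (a = BT.H ∧ b = BT.one) ∨ (a = BT.one ∧ b = BT.one) := by
  cases a <;> cases b <;> simp [prec]

@[simp] lemma prec_zero_left (b : BT k) : prec BT.zero b = false := by
  cases b <;> rfl

@[simp] lemma prec_zero_right (a : BT k) : prec a BT.zero = false := by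
  cases a <;> rfl

/- ---- U1op / U2op ---- -/

lemma U1op_zero_u {F : BT k → BT k → BT k → BT k} {x y z : BT k}
    (hF : F x y BT.zero = BT.zero) : U1op F x y z BT.zero = BT.zero := by
  unfold U1op; split_ifs with h1 h2
  · rw [hF] at h1; simp [BT.isVV] at h1
  · exact hF
  · rfl

@[simp] lemma U1op_zero_x (F : BT k → BT k → BT k → BT k) (y z u : BT k) :
    U1op F BT.zero y z u = BT.zero := by
  unfold U1op; split_ifs with h1 h2
  · simp at h1
  · simp at h2
  · rfl

@[simp] lemma U1op_zero_y (F : BT k → BT k → BT k → BT k) (x z u : BT k) :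
    U1op F x BT.zero z u = BT.zero := by
  unfold U1op; split_ifs with h1 h2
  · simp at h1
  · simp at h2
  · rfl

@[simp] lemma U1op_zero_z (F : BT k → BT k → BT k → BT k) (x y u : BT k) :
    U1op F x y BT.zero u = BT.zero := by
  unfold U1op; split_ifs with h1 h2
  · simp at h1
  · rcases h2 with ⟨h2a, h2b⟩; rw [h2b] at h2a; simp at h2a
  · rfl

lemma U2op_zero_u {F : BT k → BT k → BT k → BT k} {x y z : BT k}
    (hF : F y z BT.zero = BT.zero) : U2op F x y z BT.zero = BT.zero := by
  unfold U2op; split_ifs with h1 h2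
  · rw [hF] at h1; simp [BT.isVV] at h1
  · exact hF
  · rfl

@[simp] lemma U2op_zero_x (F : BT k → BT k → BT k → BT k) (y z u : BT k) :
    U2op F BT.zero y z u = BT.zero := by
  unfold U2op; split_ifs with h1 h2
  · simp at h1
  · rcases h2 with ⟨h2a, h2b⟩; rw [← h2a] at h2b; simp at h2b
  · rfl

@[simp] lemma U2op_zero_y (F : BT k → BT k → BT k → BT k) (x z u : BT k) :
    U2op F x BT.zero z u = BT.zero := by
  unfold U2op; split_ifs with h1 h2
  · simp at h1
  · rcases h2 with ⟨h2a, h2b⟩; simp at h2b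
  · rfl

@[simp] lemma U2op_zero_z (F : BT k → BT k → BT k → BT k) (x y u : BT k) :
    U2op F x y BT.zero u = BT.zero := by
  unfold U2op; split_ifs with h1 h2
  · simp at h1
  · simp at h2
  · rfl

lemma isP_U1op {F : BT k → BT k → BT k → BT k} {x y z u : BT k}
    (h : BT.isP (U1op F x y z u) = true) : BT.isP (F x y u) = true := by
  unfold U1op at h; split_ifs at h with h1 h2
  · rw [BT.isP_barOp] at h; exact h
  · exact h
  · simp [BT.isP] at h

lemma isP_U2op {F : BT k → BT k → BT k → BT k} {x y z u : BT k}
    (h : BT.isP (U2op F x y z u) = true) : BT.isP (F y z u) = true := by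
  unfold U2op at h; split_ifs at h with h1 h2
  · rw [BT.isP_barOp] at h; exact h
  · exact h
  · simp [BT.isP] at h

lemma isU_U1op {F : BT k → BT k → BT k → BT k} {x y z u : BT k}
    (h : BT.isU (U1op F x y z u) = true) : BT.isU (F x y u) = true := by
  unfold U1op at h; split_ifs at h with h1 h2
  · rw [BT.isU_barOp] at h; exact h
  · exact h
  · simp [BT.isU] at h

lemma isU_U2op {F : BT k → BT k → BT k → BT k} {x y z u : BT k}
    (h : BT.isU (U2op F x y z u) = true) : BT.isU (F y z u) = true := by
  unfold U2op at h; split_ifs at h with h1 h2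
  · rw [BT.isU_barOp] at h; exact h
  · exact h
  · simp [BT.isU] at h

end AuxK2

section AuxK3
variable {k : ℕ} {T : TM k} {m : ℕ}

/- ---- Nset ---- -/

lemma zero_mem_Nset : (0:ℤ) ∈ Nset T m := by
  unfold Nset
  apply Finset.mem_union_right
  simp

lemma pos_mem_Nset {l : ℕ} (hl : l ≤ m) :
    ((cfgStep T)^[l] (Q0 k)).pos ∈ Nset T m := by
  unfold Nset
  apply Finset.mem_union_left
  exact Finset.mem_image.2 ⟨l, Finset.mem_range.2 (by omega), rfl⟩

/- ---- aEl ---- -/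

lemma aEl_none (n : ℤ) : aEl T m n none = BT.one := rfl

lemma aEl_some_lt {n : ℤ} {x : {x : ℤ // x ∈ Nset T m}} (h : x.1 < n) :
    aEl T m n (some x) = BT.one := by
  simp [aEl, h]

lemma aEl_some_eq {n : ℤ} {x : {x : ℤ // x ∈ Nset T m}} (h : x.1 = n) :
    aEl T m n (some x) = BT.H := by
  simp only [aEl]
  rw [if_neg (by omega), if_pos h]

lemma aEl_some_gt {n : ℤ} {x : {x : ℤ // x ∈ Nset T m}} (h : n < x.1) :
    aEl T m n (some x) = BT.two := by
  simp only [aEl]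
  rw [if_neg (by omega), if_neg (by omega)]

lemma isU_aEl (n : ℤ) (y : Option {x : ℤ // x ∈ Nset T m}) :
    BT.isU (aEl T m n y) = true := by
  cases y with
  | none => rfl
  | some x => simp only [aEl]; split_ifs <;> rfl

lemma aEl_inj {n n' : ℤ} (hn : n ∈ Nset T m)
    (h : ∀ x : {x : ℤ // x ∈ Nset T m}, aEl T m n (some x) = aEl T m n' (some x)) :
    n = n' := by
  by_contra hne
  have := h ⟨n, hn⟩
  rw [aEl_some_eq (n := n) (x := ⟨n, hn⟩) rfl] at this
  rcases lt_trichotomy (n : ℤ) n' with hlt | heq | hgt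
  · rw [aEl_some_lt hlt] at this; simp at this
  · exact hne heq
  · rw [aEl_some_gt hgt] at this; simp at this

/- ---- qEl ---- -/

lemma qEl_none (j : Fin 3) : qEl T m j none = BT.P j := rfl

lemma qEl_some_cases (j : Fin 3) (x : {x : ℤ // x ∈ Nset T m}) :
    qEl T m j (some x) = BT.C false 1 false false ∨
    qEl T m j (some x) = BT.M false 1 false ∨
    qEl T m j (some x) = BT.D false 1 false false := by
  simp only [qEl]; split_ifs <;> simp

lemma qEl_some_agree (j j' : Fin 3) (x : {x : ℤ // x ∈ Nset T m}) :
    qEl T m j (some x) = qEl T m j' (some x) := by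
  simp only [qEl]

lemma qEl_some_ne_zero (j : Fin 3) (x : {x : ℤ // x ∈ Nset T m}) :
    qEl T m j (some x) ≠ BT.zero := by
  rcases qEl_some_cases j x with h | h | h <;> rw [h] <;> simp

lemma isVV_qEl_some (j : Fin 3) (x : {x : ℤ // x ∈ Nset T m}) :
    BT.isVV (qEl T m j (some x)) = true := by
  rcases qEl_some_cases j x with h | h | h <;> rw [h] <;> rfl

lemma isV10_qEl_some (j : Fin 3) (x : {x : ℤ // x ∈ Nset T m}) :
    BT.isV10 (qEl T m j (some x)) = true := by
  rcases qEl_some_cases j x with h | h | h <;> rw [h] <;> simp [BT.isV10]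

lemma isP_qEl_some (j : Fin 3) (x : {x : ℤ // x ∈ Nset T m}) :
    BT.isP (qEl T m j (some x)) = false := by
  rcases qEl_some_cases j x with h | h | h <;> rw [h] <;> rfl

lemma qEl_ne (j j' : Fin 3) (h : j ≠ j') : qEl T m j ≠ qEl T m j' := by
  intro he
  have := congrFun he none
  rw [qEl_none, qEl_none] at this
  exact h (by injection this)

/- ---- polynomial closure lemmas ---- -/

lemma polyk_cw {n : ℕ} {p : (Fin n → AA T m) → AA T m} (hp : PolyK T m p)
    (y : Option {x : ℤ // x ∈ Nset T m}) :
    ∀ v w : Fin n → AA T m, (∀ i, v i y = w i y) → p v y = p w y := by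
  induction hp with
  | proj i => intro v w h; exact h i
  | const c hc => intro v w h; rfl
  | zeroOp => intro v w h; rfl
  | t0 _ ih => intro v w h; simp only [ih v w h]
  | t1 _ _ ih1 ih2 => intro v w h; simp only [ih1 v w h, ih2 v w h]
  | meet _ _ ih1 ih2 => intro v w h; simp only [ih1 v w h, ih2 v w h]
  | meetI j _ _ ih1 ih2 => intro v w h; simp only [ih1 v w h, ih2 v w h]
  | jop _ _ _ ih1 ih2 ih3 => intro v w h; simp only [ih1 v w h, ih2 v w h, ih3 v w h]
  | s1 _ _ _ _ ih1 ih2 ih3 ih4 =>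
      intro v w h; simp only [ih1 v w h, ih2 v w h, ih3 v w h, ih4 v w h]
  | s2 _ _ _ _ _ ih1 ih2 ih3 ih4 ih5 =>
      intro v w h
      simp only [ih1 v w h, ih2 v w h, ih3 v w h, ih4 v w h, ih5 v w h]
  | mach i hi r t b _ _ _ ih1 ih2 ih3 =>
      intro v w h; simp only [ih1 v w h, ih2 v w h, ih3 v w h]
  | u1 i hi r t b _ _ _ _ ih1 ih2 ih3 ih4 =>
      intro v w h; simp only [ih1 v w h, ih2 v w h, ih3 v w h, ih4 v w h]
  | u2 i hi r t b _ _ _ _ ih1 ih2 ih3 ih4 =>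
      intro v w h; simp only [ih1 v w h, ih2 v w h, ih3 v w h, ih4 v w h]

lemma polyk_inK {n : ℕ} {p : (Fin n → AA T m) → AA T m} (hp : PolyK T m p) :
    ∀ v : Fin n → AA T m, (∀ i, InK T m (v i)) → InK T m (p v) := by
  induction hp with
  | proj i => intro v hv; exact hv i
  | const c hc => intro v hv; exact hc
  | zeroOp => intro v hv; exact InK.zeroOp
  | t0 _ ih => intro v hv; exact InK.t0 (ih v hv)
  | t1 _ _ ih1 ih2 => intro v hv; exact InK.t1 (ih1 v hv) (ih2 v hv)
  | meet _ _ ih1 ih2 => intro v hv; exact InK.meet (ih1 v hv) (ih2 v hv)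
  | meetI j _ _ ih1 ih2 => intro v hv; exact InK.meetI j (ih1 v hv) (ih2 v hv)
  | jop _ _ _ ih1 ih2 ih3 =>
      intro v hv; exact InK.jop (ih1 v hv) (ih2 v hv) (ih3 v hv)
  | s1 _ _ _ _ ih1 ih2 ih3 ih4 =>
      intro v hv; exact InK.s1 (ih1 v hv) (ih2 v hv) (ih3 v hv) (ih4 v hv)
  | s2 _ _ _ _ _ ih1 ih2 ih3 ih4 ih5 =>
      intro v hv
      exact InK.s2 (ih1 v hv) (ih2 v hv) (ih3 v hv) (ih4 v hv) (ih5 v hv)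
  | mach i hi r t b _ _ _ ih1 ih2 ih3 =>
      intro v hv; exact InK.mach i hi r t b (ih1 v hv) (ih2 v hv) (ih3 v hv)
  | u1 i hi r t b _ _ _ _ ih1 ih2 ih3 ih4 =>
      intro v hv
      exact InK.u1 i hi r t b (ih1 v hv) (ih2 v hv) (ih3 v hv) (ih4 v hv)
  | u2 i hi r t b _ _ _ _ ih1 ih2 ih3 ih4 =>
      intro v hv
      exact InK.u2 i hi r t b (ih1 v hv) (ih2 v hv) (ih3 v hv) (ih4 v hv)

lemma polyk_resp {R : AA T m → AA T m → Prop} (hR : IsCongK T m R) {n : ℕ}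
    {p : (Fin n → AA T m) → AA T m} (hp : PolyK T m p) :
    ∀ v w : Fin n → AA T m, (∀ i, R (v i) (w i)) → R (p v) (p w) := by
  induction hp with
  | proj i => intro v w h; exact h i
  | const c hc => intro v w h; exact hR.refl c hc
  | zeroOp => intro v w h; exact hR.refl _ InK.zeroOp
  | t0 _ ih => intro v w h; exact hR.t0 (ih v w h)
  | t1 _ _ ih1 ih2 => intro v w h; exact hR.t1 (ih1 v w h) (ih2 v w h)
  | meet _ _ ih1 ih2 => intro v w h; exact hR.meet (ih1 v w h) (ih2 v w h)
  | meetI j _ _ ih1 ih2 => intro v w h; exact hR.meetI j (ih1 v w h) (ih2 v w h)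
  | jop _ _ _ ih1 ih2 ih3 =>
      intro v w h; exact hR.jop (ih1 v w h) (ih2 v w h) (ih3 v w h)
  | s1 _ _ _ _ ih1 ih2 ih3 ih4 =>
      intro v w h; exact hR.s1 (ih1 v w h) (ih2 v w h) (ih3 v w h) (ih4 v w h)
  | s2 _ _ _ _ _ ih1 ih2 ih3 ih4 ih5 =>
      intro v w h
      exact hR.s2 (ih1 v w h) (ih2 v w h) (ih3 v w h) (ih4 v w h) (ih5 v w h)
  | mach i hi r t b _ _ _ ih1 ih2 ih3 =>
      intro v w h; exact hR.mach i hi r t b (ih1 v w h) (ih2 v w h) (ih3 v w h)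
  | u1 i hi r t b _ _ _ _ ih1 ih2 ih3 ih4 =>
      intro v w h
      exact hR.u1 i hi r t b (ih1 v w h) (ih2 v w h) (ih3 v w h) (ih4 v w h)
  | u2 i hi r t b _ _ _ _ ih1 ih2 ih3 ih4 =>
      intro v w h
      exact hR.u2 i hi r t b (ih1 v w h) (ih2 v w h) (ih3 v w h) (ih4 v w h)

lemma upoly_resp {R : AA T m → AA T m → Prop} (hR : IsCongK T m R)
    {F : AA T m → AA T m} (hF : UPolyK T m F) {f g : AA T m} (h : R f g) :
    R (F f) (F g) := by
  have := polyk_resp hR hF ![f] ![g] (fun i => by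
    rw [Subsingleton.elim i 0]; simpa using h)
  simpa using this

lemma upoly_inK {F : AA T m → AA T m} (hF : UPolyK T m F) {f : AA T m}
    (h : InK T m f) : InK T m (F f) := by
  have := polyk_inK hF ![f] (fun i => by
    rw [Subsingleton.elim i 0]; simpa using h)
  simpa using this

lemma upoly_cw {F : AA T m → AA T m} (hF : UPolyK T m F) {f g : AA T m}
    (y : Option {x : ℤ // x ∈ Nset T m}) (h : f y = g y) : F f y = F g y := by
  have := polyk_cw hF y ![f] ![g] (fun i => by
    rw [Subsingleton.elim i 0]; simpa using h)
  simpa using this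

end AuxK3


section Good
variable {k : ℕ} {T : TM k} {m : ℕ}

lemma isP_false_of {E g : BT k} (hinv : BT.isP E = true → BT.isP g = true)
    (hg : BT.isP g = false) : BT.isP E = false := by
  cases hb : BT.isP E
  · rfl
  · exact absurd (hinv hb) (by rw [hg]; simp)

lemma isBar_false_of {E g : BT k} (hinv : BT.isBarB E = true → BT.isBarB g = true)
    (hg : BT.isBarB g = false) : BT.isBarB E = false := by
  cases hb : BT.isBarB E
  · rfl
  · exact absurd (hinv hb) (by rw [hg]; simp)

lemma aEl_eq_H_iff {n : ℤ} {x : {x : ℤ // x ∈ Nset T m}} :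
    aEl T m n (some x) = BT.H ↔ x.1 = n := by
  rcases lt_trichotomy x.1 n with h|h|h
  · rw [aEl_some_lt h]; simp; omega
  · rw [aEl_some_eq h]; simp; omega
  · rw [aEl_some_gt h]; simp; omega

lemma aEl_eq_one_iff {n : ℤ} {x : {x : ℤ // x ∈ Nset T m}} :
    aEl T m n (some x) = BT.one ↔ x.1 < n := by
  rcases lt_trichotomy x.1 n with h|h|h
  · rw [aEl_some_lt h]; simp; omega
  · rw [aEl_some_eq h]; simp; omega
  · rw [aEl_some_gt h]; simp; omega

lemma aEl_eq_two_iff {n : ℤ} {x : {x : ℤ // x ∈ Nset T m}} :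
    aEl T m n (some x) = BT.two ↔ n < x.1 := by
  rcases lt_trichotomy x.1 n with h|h|h
  · rw [aEl_some_lt h]; simp; omega
  · rw [aEl_some_eq h]; simp; omega
  · rw [aEl_some_gt h]; simp; omega

lemma aEl_congr {n n' : ℤ} (h : n = n') (x : Option {x : ℤ // x ∈ Nset T m}) :
    aEl T m n x = aEl T m n' x := by rw [h]

/-- adjacency contradiction for U1op -/
lemma adj1 {pn qn rn : ℤ} (hqn : qn ∈ Nset T m) (hrn : rn ∈ Nset T m)
    (hxy : ∀ x : {x : ℤ // x ∈ Nset T m},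
      prec (aEl T m pn (some x)) (aEl T m qn (some x)) = true)
    (hz : ∀ x : {x : ℤ // x ∈ Nset T m},
      aEl T m qn (some x) = aEl T m rn (some x) ∨
      prec (aEl T m pn (some x)) (aEl T m rn (some x)) = true)
    (hne : ∃ x : {x : ℤ // x ∈ Nset T m},
      aEl T m qn (some x) ≠ aEl T m rn (some x)) : False := by
  have hqr : qn ≠ rn := by
    rintro rfl
    obtain ⟨x, hx⟩ := hne
    exact hx rfl
  rcases lt_trichotomy rn qn with hlt | heq | hgt
  · -- rn < qn : contradiction at coordinate rn
    have e1 : aEl T m qn (some ⟨rn, hrn⟩) = BT.one := aEl_some_lt hlt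
    have e2 : aEl T m rn (some ⟨rn, hrn⟩) = BT.H :=
      aEl_some_eq (n := rn) (x := ⟨rn, hrn⟩) rfl
    have h1 := hxy ⟨rn, hrn⟩
    rw [e1] at h1
    have hp1 : aEl T m pn (some ⟨rn, hrn⟩) = BT.H ∨
        aEl T m pn (some ⟨rn, hrn⟩) = BT.one := by
      rcases prec_iff.1 h1 with ⟨ha, hb⟩|⟨ha, hb⟩|⟨ha, hb⟩|⟨ha, hb⟩ <;>
        first | (left; exact ha) | (right; exact ha) | simp at hb
    have h2 := hz ⟨rn, hrn⟩
    rw [e1, e2] at h2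
    rcases h2 with h2 | h2
    · simp at h2
    · rcases prec_iff.1 h2 with ⟨ha, hb⟩|⟨ha, hb⟩|⟨ha, hb⟩|⟨ha, hb⟩ <;>
        rcases hp1 with hp1 | hp1 <;> simp_all
  · exact hqr heq.symm
  · -- qn < rn : contradiction at coordinate qn
    have e1 : aEl T m qn (some ⟨qn, hqn⟩) = BT.H :=
      aEl_some_eq (n := qn) (x := ⟨qn, hqn⟩) rfl
    have e2 : aEl T m rn (some ⟨qn, hqn⟩) = BT.one := aEl_some_lt hgt
    have h1 := hxy ⟨qn, hqn⟩
    rw [e1] at h1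
    have hptwo : aEl T m pn (some ⟨qn, hqn⟩) = BT.two := by
      rcases prec_iff.1 h1 with ⟨ha, hb⟩|⟨ha, hb⟩|⟨ha, hb⟩|⟨ha, hb⟩ <;>
        first | exact ha | simp at hb
    have h2 := hz ⟨qn, hqn⟩
    rw [e1, e2, hptwo] at h2
    rcases h2 with h2 | h2
    · simp at h2
    · rcases prec_iff.1 h2 with ⟨ha, hb⟩|⟨ha, hb⟩|⟨ha, hb⟩|⟨ha, hb⟩ <;> simp_all

/-- adjacency contradiction for U2op -/
lemma adj2 {pn qn rn : ℤ} (hpn : pn ∈ Nset T m) (hqn : qn ∈ Nset T m)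
    (hyz : ∀ x : {x : ℤ // x ∈ Nset T m},
      prec (aEl T m qn (some x)) (aEl T m rn (some x)) = true)
    (hxz : ∀ x : {x : ℤ // x ∈ Nset T m},
      aEl T m pn (some x) = aEl T m qn (some x) ∨
      prec (aEl T m pn (some x)) (aEl T m rn (some x)) = true)
    (hne : ∃ x : {x : ℤ // x ∈ Nset T m},
      aEl T m pn (some x) ≠ aEl T m qn (some x)) : False := by
  have hpq : pn ≠ qn := by
    rintro rfl
    obtain ⟨x, hx⟩ := hne
    exact hx rfl
  -- at coordinate pn : pn < rn and pn < qn
  have e1 : aEl T m pn (some ⟨pn, hpn⟩) = BT.H :=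
    aEl_some_eq (n := pn) (x := ⟨pn, hpn⟩) rfl
  have h2 := hxz ⟨pn, hpn⟩
  rw [e1] at h2
  have hrone : aEl T m rn (some ⟨pn, hpn⟩) = BT.one := by
    rcases h2 with h2 | h2
    · exfalso
      have hx : pn = qn := by simpa using aEl_eq_H_iff.1 h2.symm
      exact hpq hx
    · rcases prec_iff.1 h2 with ⟨ha, hb⟩|⟨ha, hb⟩|⟨ha, hb⟩|⟨ha, hb⟩ <;>
        first | exact hb | simp at ha
  have hplr : pn < rn := by
    have := aEl_eq_one_iff.1 hrone; simpa using this
  have h1 := hyz ⟨pn, hpn⟩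
  rw [hrone] at h1
  have hqone : aEl T m qn (some ⟨pn, hpn⟩) = BT.one := by
    rcases prec_iff.1 h1 with ⟨ha, hb⟩|⟨ha, hb⟩|⟨ha, hb⟩|⟨ha, hb⟩
    · exact absurd hb (by simp)
    · exact absurd hb (by simp)
    · exfalso
      have hx : pn = qn := by simpa using aEl_eq_H_iff.1 ha
      exact hpq hx
    · exact ha
  have hplq : pn < qn := by
    have := aEl_eq_one_iff.1 hqone; simpa using this
  -- at coordinate qn : contradiction
  have e3 : aEl T m qn (some ⟨qn, hqn⟩) = BT.H :=
    aEl_some_eq (n := qn) (x := ⟨qn, hqn⟩) rfl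
  have h3 := hyz ⟨qn, hqn⟩
  rw [e3] at h3
  have hrone2 : aEl T m rn (some ⟨qn, hqn⟩) = BT.one := by
    rcases prec_iff.1 h3 with ⟨ha, hb⟩|⟨ha, hb⟩|⟨ha, hb⟩|⟨ha, hb⟩ <;>
      first | exact hb | simp at ha
  have hpgt : aEl T m pn (some ⟨qn, hqn⟩) = BT.two :=
    aEl_eq_two_iff.2 (by simpa using hplq)
  have h4 := hxz ⟨qn, hqn⟩
  rw [e3, hpgt, hrone2] at h4
  rcases h4 with h4 | h4
  · simp at h4
  · simp [prec] at h4

/-- the structure lemma for elements of K : no P-values on N, U-valued elements are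
sequential patterns, full-support elements carry no barred values. -/
lemma inK_good {f : AA T m} (hf : InK T m f) :
    (∀ x, BT.isP (f (some x)) = false) ∧
    ((∀ x, BT.isU (f (some x)) = true) →
      ∃ n, n ∈ Nset T m ∧ ∀ x, f (some x) = aEl T m n (some x)) ∧
    ((∀ x, f (some x) ≠ BT.zero) → ∀ x, BT.isBarB (f (some x)) = false) := by
  induction hf with
  | gen_a n hn =>
      refine ⟨fun x => BT.isU_not_P (isU_aEl n (some x)), fun _ => ⟨n, hn, fun x => rfl⟩,
        fun _ x => BT.isU_not_bar (isU_aEl n (some x))⟩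
  | gen_q j =>
      refine ⟨fun x => isP_qEl_some j x, fun h => ?_, fun _ x => ?_⟩
      · exact absurd (h ⟨0, zero_mem_Nset⟩)
          (by rw [BT.isVV_not_U (isVV_qEl_some j ⟨0, zero_mem_Nset⟩)]; simp)
      · rcases qEl_some_cases j x with h | h | h <;> rw [h] <;> rfl
  | zeroOp =>
      refine ⟨fun x => rfl, fun h => ?_, fun h x => ?_⟩
      · exact absurd (h ⟨0, zero_mem_Nset⟩) (by simp [BT.isU])
      · exact absurd rfl (h ⟨0, zero_mem_Nset⟩)
  | t0 hg ihg =>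
      refine ⟨fun x => isP_false_of BT.isP_T0 (ihg.1 x), fun h => ?_,
        fun _ x => BT.isBar_T0 _⟩
      exact absurd (h ⟨0, zero_mem_Nset⟩) (by rw [BT.isU_T0]; simp)
  | t1 hg hh ihg ihh =>
      refine ⟨fun x => isP_false_of BT.isP_T1 (ihg.1 x), fun h => ?_,
        fun _ x => BT.isBar_T1 _ _⟩
      exact absurd (h ⟨0, zero_mem_Nset⟩) (by rw [BT.isU_T1]; simp)
  | meet hg hh ihg ihh =>
      rename_i g2 h2
      refine ⟨fun x => isP_false_of BT.isP_meet (ihg.1 x), fun hU => ?_, fun hFull x => ?_⟩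
      · have key : ∀ x, BT.meet (g2 (some x)) (h2 (some x)) = g2 (some x) :=
          fun x => (BT.isU_meet (hU x)).2
        have hgU : ∀ x, BT.isU (g2 (some x)) = true := fun x => by
          rw [← key x]; exact hU x
        obtain ⟨n, hn, hp⟩ := ihg.2.1 hgU
        refine ⟨n, hn, fun x => ?_⟩
        show BT.meet (g2 (some x)) (h2 (some x)) = _
        rw [key x, hp x]
      · refine isBar_false_of (fun hb => ?_) (ihg.2.2 (fun x' =>
          (BT.meet_ne_zero (hFull x')).1) x)
        have hb' : BT.isBarB (BT.meet (g2 (some x)) (h2 (some x))) = true := hb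
        rw [(BT.isBar_meet hb').2] at hb'; exact hb'
  | meetI j hg hh ihg ihh =>
      refine ⟨fun x => isP_false_of BT.isP_meetI (ihg.1 x), fun h => ?_,
        fun _ x => BT.isBar_meetI _ _ _⟩
      exact absurd (h ⟨0, zero_mem_Nset⟩) (by rw [BT.isU_meetI]; simp)
  | jop hg hh hp ihg ihh ihp =>
      rename_i g2 h2 p2
      refine ⟨fun x => isP_false_of BT.isP_J' (ihg.1 x), fun hU => ?_, fun hFull x => ?_⟩
      · have key : ∀ x, g2 (some x) = h2 (some x) ∧ p2 (some x) = g2 (some x) ∧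
            BT.J' (g2 (some x)) (h2 (some x)) (p2 (some x)) = g2 (some x) :=
          fun x => BT.isU_J' (hU x)
        have hgU : ∀ x, BT.isU (g2 (some x)) = true := fun x => by
          rw [← (key x).2.2]; exact hU x
        obtain ⟨n, hn, hpt⟩ := ihg.2.1 hgU
        refine ⟨n, hn, fun x => ?_⟩
        show BT.J' (g2 (some x)) (h2 (some x)) (p2 (some x)) = _
        rw [(key x).2.2, hpt x]
      · exact isBar_false_of BT.isBar_J' (ihg.2.2 (fun x' =>
          (BT.J'_ne_zero (hFull x')).1) x)
  | s1 hu hg hh hp ihu ihg ihh ihp =>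
      rename_i u2 g2 h2 p2
      refine ⟨fun x => isP_false_of BT.isP_S1 (ihg.1 x), fun hU => ?_, fun hFull x => ?_⟩
      · have huU : ∀ x, BT.isU (u2 (some x)) = true := fun x => by
          rcases (BT.isU_S1 (hU x)).1 with h'|h' <;> rw [h'] <;> rfl
        obtain ⟨n, hn, hpt⟩ := ihu.2.1 huU
        exfalso
        have hH := hpt ⟨n, hn⟩
        rw [aEl_some_eq (n := n) (x := ⟨n, hn⟩) rfl] at hH
        rcases (BT.isU_S1 (hU ⟨n, hn⟩)).1 with h'|h' <;> rw [h'] at hH <;> simp at hH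
      · exact isBar_false_of BT.isBar_S1 (ihg.2.2 (fun x' =>
          BT.S1_ne_zero (hFull x')) x)
  | s2 hu hv hg hh hp ihu ihv ihg ihh ihp =>
      refine ⟨fun x => isP_false_of BT.isP_S2 (ihg.1 x), fun hU => ?_, fun hFull x => ?_⟩
      · exact absurd (hU ⟨0, zero_mem_Nset⟩) (by rw [BT.isU_S2]; simp)
      · exact isBar_false_of BT.isBar_S2 (ihg.2.2 (fun x' =>
          BT.S2_ne_zero (hFull x')) x)
  | mach i hi r t b hg hh hp ihg ihh ihp =>
      refine ⟨fun x => isP_false_of isP_mop (ihp.1 x), fun hU => ?_, fun hFull x => ?_⟩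
      · exact (isU_mop (hU ⟨0, zero_mem_Nset⟩)).elim
      · exact isBar_false_of isBar_mop (ihp.2.2 (fun x' =>
          mop_ne_zero (hFull x')) x)
  | u1 i hi r t b hg hh hp hq ihg ihh ihp ihq =>
      refine ⟨fun x => isP_false_of (fun hb => isP_mop (isP_U1op hb)) (ihq.1 x),
        fun hU => ?_, fun hFull x₃ => ?_⟩
      · exact (isU_mop (isU_U1op (hU ⟨0, zero_mem_Nset⟩))).elim
      · -- no bars in full U1op images
        rename_i g h p q
        have hana : ∀ x, prec (g (some x)) (h (some x)) = true ∧
            (h (some x) = p (some x) ∨ prec (g (some x)) (p (some x)) = true) := by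
          intro x
          have hnz := hFull x
          revert hnz
          show U1op (mop T i r t b) (g (some x)) (h (some x)) (p (some x))
            (q (some x)) ≠ BT.zero → _
          unfold U1op
          split_ifs with h1 h2
          · exact fun _ => ⟨h1.1, Or.inr h1.2.1⟩
          · exact fun _ => ⟨h2.1, Or.inl h2.2⟩
          · exact fun hn => absurd rfl hn
        have hqfull : ∀ x, q (some x) ≠ BT.zero := by
          intro x
          have hnz := hFull x
          revert hnz
          show U1op (mop T i r t b) (g (some x)) (h (some x)) (p (some x))
            (q (some x)) ≠ BT.zero → _
          unfold U1op
          split_ifs with h1 h2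
          · intro _ hq0
            rw [hq0, mop_zero_u] at h1
            simp [BT.isVV] at h1
          · intro hn hq0
            rw [hq0, mop_zero_u] at hn
            exact hn rfl
          · exact fun hn => absurd rfl hn
        cases hbar : BT.isBarB (U1op (mop T i r t b) (g (some x₃)) (h (some x₃))
          (p (some x₃)) (q (some x₃))) with
        | false => rfl
        | true =>
          exfalso
          revert hbar
          unfold U1op
          split_ifs with h1 h2
          · -- clause 1 : adjacency contradiction
            intro _
            have hgU : ∀ x, BT.isU (g (some x)) = true :=
              fun x => (prec_isU (hana x).1).1
            have hhU : ∀ x, BT.isU (h (some x)) = true :=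
              fun x => (prec_isU (hana x).1).2
            have hpU : ∀ x, BT.isU (p (some x)) = true := by
              intro x
              rcases (hana x).2 with he | hpr
              · rw [← he]; exact hhU x
              · exact (prec_isU hpr).2
            obtain ⟨pn, hpn, hgP⟩ := ihg.2.1 hgU
            obtain ⟨qn, hqn, hhP⟩ := ihh.2.1 hhU
            obtain ⟨rn, hrn, hpP⟩ := ihp.2.1 hpU
            refine adj1 (pn := pn) hqn hrn (fun x => ?_) (fun x => ?_) ⟨x₃, ?_⟩
            · rw [← hgP x, ← hhP x]; exact (hana x).1
            · rcases (hana x).2 with he | hpr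
              · left; rw [← hhP x, ← hpP x]; exact he
              · right; rw [← hgP x, ← hpP x]; exact hpr
            · rw [← hhP x₃, ← hpP x₃]; exact h1.2.2.1
          · -- clause 2 : barred q
            intro hb2
            have hb3 : BT.isBarB (q (some x₃)) = true := isBar_mop hb2
            rw [ihq.2.2 hqfull x₃] at hb3
            simp at hb3
          · intro hb; simp [BT.isBarB] at hb
  | u2 i hi r t b hg hh hp hq ihg ihh ihp ihq =>
      refine ⟨fun x => isP_false_of (fun hb => isP_mop (isP_U2op hb)) (ihq.1 x),
        fun hU => ?_, fun hFull x₃ => ?_⟩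
      · exact (isU_mop (isU_U2op (hU ⟨0, zero_mem_Nset⟩))).elim
      · rename_i g h p q
        have hana : ∀ x, prec (h (some x)) (p (some x)) = true ∧
            (g (some x) = h (some x) ∨ prec (g (some x)) (p (some x)) = true) := by
          intro x
          have hnz := hFull x
          revert hnz
          show U2op (mop T i r t b) (g (some x)) (h (some x)) (p (some x))
            (q (some x)) ≠ BT.zero → _
          unfold U2op
          split_ifs with h1 h2
          · exact fun _ => ⟨h1.2.1, Or.inr h1.1⟩
          · exact fun _ => ⟨h2.2, Or.inl h2.1⟩
          · exact fun hn => absurd rfl hn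
        have hqfull : ∀ x, q (some x) ≠ BT.zero := by
          intro x
          have hnz := hFull x
          revert hnz
          show U2op (mop T i r t b) (g (some x)) (h (some x)) (p (some x))
            (q (some x)) ≠ BT.zero → _
          unfold U2op
          split_ifs with h1 h2
          · intro _ hq0
            rw [hq0, mop_zero_u] at h1
            simp [BT.isVV] at h1
          · intro hn hq0
            rw [hq0, mop_zero_u] at hn
            exact hn rfl
          · exact fun hn => absurd rfl hn
        cases hbar : BT.isBarB (U2op (mop T i r t b) (g (some x₃)) (h (some x₃))
          (p (some x₃)) (q (some x₃))) with
        | false => rfl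
        | true =>
          exfalso
          revert hbar
          unfold U2op
          split_ifs with h1 h2
          · intro _
            have hhU : ∀ x, BT.isU (h (some x)) = true :=
              fun x => (prec_isU (hana x).1).1
            have hpU : ∀ x, BT.isU (p (some x)) = true :=
              fun x => (prec_isU (hana x).1).2
            have hgU : ∀ x, BT.isU (g (some x)) = true := by
              intro x
              rcases (hana x).2 with he | hpr
              · rw [he]; exact hhU x
              · exact (prec_isU hpr).1
            obtain ⟨pn, hpn, hgP⟩ := ihg.2.1 hgU
            obtain ⟨qn, hqn, hhP⟩ := ihh.2.1 hhU
            obtain ⟨rn, hrn, hpP⟩ := ihp.2.1 hpU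
            refine adj2 (rn := rn) hpn hqn (fun x => ?_) (fun x => ?_) ⟨x₃, ?_⟩
            · rw [← hhP x, ← hpP x]; exact (hana x).1
            · rcases (hana x).2 with he | hpr
              · left; rw [← hgP x, ← hhP x]; exact he
              · right; rw [← hgP x, ← hpP x]; exact hpr
            · rw [← hgP x₃, ← hhP x₃]; exact h1.2.2.1
          · intro hb2
            have hb3 : BT.isBarB (q (some x₃)) = true := isBar_mop hb2
            rw [ihq.2.2 hqfull x₃] at hb3
            simp at hb3
          · intro hb; simp [BT.isBarB] at hb

end Good


namespace BT
variable {k : ℕ}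

lemma S1_x_zero (u b c : BT k) : S1 u zero b c = zero := by
  unfold S1; split_ifs with h1 h2 <;> first | rfl | simp_all [isP]

lemma S1_y_zero (u a c : BT k) (ha : a ≠ zero) : S1 u a zero c = zero := by
  unfold S1; split_ifs with h1 h2
  · exact absurd h1.2.1 ha
  · simp_all [isP]
  · rfl

lemma S1_z_zero (u a b : BT k) (hb : b ≠ zero) : S1 u a b zero = zero := by
  unfold S1; split_ifs with h1 h2
  · exact absurd h1.2.2.1 hb
  · simp_all [isP]
  · rfl

lemma S1_u_zero (a b c : BT k) (hP : isP a = false) : S1 zero a b c = zero := by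
  have hn1 : ¬(((zero : BT k) = one ∨ (zero : BT k) = two) ∧ a = b ∧ b = c ∧
      isUVV a = true) := by
    rintro ⟨h'|h', -⟩ <;> simp at h'
  have hn2 : ¬(isP a = true ∧ isP b = true ∧ isP c = true) := by
    rintro ⟨hpa, -⟩; rw [hP] at hpa; simp at hpa
  unfold S1
  rw [if_neg hn1, if_neg hn2]

lemma S2_x_zero (u v b c : BT k) : S2 u v zero b c = zero := by
  unfold S2; split_ifs with h1 h2 <;> first | rfl | simp_all [isP]

lemma S2_y_zero (u v a c : BT k) (ha : a ≠ zero) : S2 u v a zero c = zero := by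
  unfold S2; split_ifs with h1 h2
  · exact absurd h1.2.2.1 ha
  · simp_all [isP]
  · rfl

lemma S2_z_zero (u v a b : BT k) (hb : b ≠ zero) : S2 u v a b zero = zero := by
  unfold S2; split_ifs with h1 h2
  · exact absurd h1.2.2.2.1 hb
  · simp_all [isP]
  · rfl

lemma S2_u_zero (v a b c : BT k) (hP : isP a = false) : S2 zero v a b c = zero := by
  have hn1 : ¬(isVV v = true ∧ (zero : BT k) = barOp v ∧ a = b ∧ b = c ∧
      isVV a = true) := by
    rintro ⟨hv, he, -⟩
    exact barOp_ne_zero hv he.symm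
  have hn2 : ¬(isP a = true ∧ isP b = true ∧ isP c = true) := by
    rintro ⟨hpa, -⟩; rw [hP] at hpa; simp at hpa
  unfold S2
  rw [if_neg hn1, if_neg hn2]

lemma S2_v_zero (u a b c : BT k) (hP : isP a = false) : S2 u zero a b c = zero := by
  have hn1 : ¬(isVV (zero : BT k) = true ∧ u = barOp zero ∧ a = b ∧ b = c ∧
      isVV a = true) := by
    rintro ⟨hv, -⟩; simp [isVV] at hv
  have hn2 : ¬(isP a = true ∧ isP b = true ∧ isP c = true) := by
    rintro ⟨hpa, -⟩; rw [hP] at hpa; simp at hpa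
  unfold S2
  rw [if_neg hn1, if_neg hn2]

lemma J'_z_zero (a b : BT k) (hno2 : ¬(isVV b = true ∧ a = barOp b)) :
    J' a b zero = zero := by
  unfold J'; split_ifs with h1
  · simp
  · rfl

end BT

section MLsec
variable {k : ℕ} {T : TM k} {m : ℕ}

/-- Main separation lemma: a polynomial value on a tuple that is punctured (or
pointwise equal) on the N-coordinates is either punctured or agrees at s₀. -/
lemma ML_gen {n : ℕ} {p : (Fin n → AA T m) → AA T m} (hp : PolyK T m p) :
    ∀ vv ww : Fin n → AA T m, (∀ i, InK T m (vv i)) →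
    (∀ i x, vv i (some x) = ww i (some x)) →
    (∀ i, (∃ x, vv i (some x) = BT.zero) ∨ vv i none = ww i none) →
    (∃ x, p vv (some x) = BT.zero) ∨ p vv none = p ww none := by
  induction hp with
  | proj i => intro vv ww hK hag hOr; exact hOr i
  | const c hc => intro vv ww hK hag hOr; right; rfl
  | zeroOp => intro vv ww hK hag hOr; left; exact ⟨⟨0, zero_mem_Nset⟩, rfl⟩
  | t0 hp1 ih =>
      rename_i p1
      intro vv ww hK hag hOr
      rcases ih vv ww hK hag hOr with ⟨x, hx⟩ | heq
      · left
        refine ⟨x, ?_⟩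
        show BT.T0 (p1 vv (some x)) = BT.zero
        rw [hx]; rfl
      · right
        show BT.T0 (p1 vv none) = BT.T0 (p1 ww none)
        rw [heq]
  | t1 hp1 hp2 ih1 ih2 =>
      rename_i p1 p2
      intro vv ww hK hag hOr
      rcases ih1 vv ww hK hag hOr with ⟨x, hx⟩ | heq1
      · left
        refine ⟨x, ?_⟩
        show BT.T1 (p1 vv (some x)) (p2 vv (some x)) = BT.zero
        rw [hx]; simp
      · rcases ih2 vv ww hK hag hOr with ⟨x, hx⟩ | heq2
        · left
          refine ⟨x, ?_⟩
          show BT.T1 (p1 vv (some x)) (p2 vv (some x)) = BT.zero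
          rw [hx]; simp
        · right
          show BT.T1 (p1 vv none) (p2 vv none) = BT.T1 (p1 ww none) (p2 ww none)
          rw [heq1, heq2]
  | meet hp1 hp2 ih1 ih2 =>
      rename_i p1 p2
      intro vv ww hK hag hOr
      rcases ih1 vv ww hK hag hOr with ⟨x, hx⟩ | heq1
      · left
        refine ⟨x, ?_⟩
        show BT.meet (p1 vv (some x)) (p2 vv (some x)) = BT.zero
        rw [hx]; simp
      · rcases ih2 vv ww hK hag hOr with ⟨x, hx⟩ | heq2
        · left
          refine ⟨x, ?_⟩
          show BT.meet (p1 vv (some x)) (p2 vv (some x)) = BT.zero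
          rw [hx]; simp
        · right
          show BT.meet (p1 vv none) (p2 vv none) = BT.meet (p1 ww none) (p2 ww none)
          rw [heq1, heq2]
  | meetI j hp1 hp2 ih1 ih2 =>
      rename_i p1 p2
      intro vv ww hK hag hOr
      rcases ih1 vv ww hK hag hOr with ⟨x, hx⟩ | heq1
      · left
        refine ⟨x, ?_⟩
        show BT.meetI j (p1 vv (some x)) (p2 vv (some x)) = BT.zero
        rw [hx]; simp
      · rcases ih2 vv ww hK hag hOr with ⟨x, hx⟩ | heq2
        · left
          refine ⟨x, ?_⟩
          show BT.meetI j (p1 vv (some x)) (p2 vv (some x)) = BT.zero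
          rw [hx]; simp
        · right
          show BT.meetI j (p1 vv none) (p2 vv none) = BT.meetI j (p1 ww none) (p2 ww none)
          rw [heq1, heq2]
  | jop hp1 hp2 hp3 ih1 ih2 ih3 =>
      rename_i p1 p2 p3
      intro vv ww hK hag hOr
      have K1 : InK T m (p1 vv) := polyk_inK hp1 vv hK
      have K2 : InK T m (p2 vv) := polyk_inK hp2 vv hK
      by_cases hz1 : ∃ x, p1 vv (some x) = BT.zero
      · left
        obtain ⟨x, hx⟩ := hz1
        refine ⟨x, ?_⟩
        show BT.J' (p1 vv (some x)) (p2 vv (some x)) (p3 vv (some x)) = BT.zero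
        rw [hx]; simp
      · by_cases hz2 : ∃ x, p2 vv (some x) = BT.zero
        · left
          obtain ⟨x, hx⟩ := hz2
          refine ⟨x, ?_⟩
          show BT.J' (p1 vv (some x)) (p2 vv (some x)) (p3 vv (some x)) = BT.zero
          rw [hx]; simp
        · push_neg at hz1 hz2
          by_cases hz3 : ∃ x, p3 vv (some x) = BT.zero
          · obtain ⟨x, hx⟩ := hz3
            by_cases hc : BT.isVV (p2 vv (some x)) = true ∧
                p1 vv (some x) = BT.barOp (p2 vv (some x))
            · -- barred full element: impossible
              exfalso
              rcases BT.bar_cases hc.1 hc.2 with ⟨hb, _⟩ | hb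
              · have hnb := (inK_good K1).2.2 hz1 x
                rw [hb] at hnb; simp at hnb
              · have hnb := (inK_good K2).2.2 hz2 x
                rw [hb] at hnb; simp at hnb
            · left
              refine ⟨x, ?_⟩
              show BT.J' (p1 vv (some x)) (p2 vv (some x)) (p3 vv (some x)) = BT.zero
              rw [hx]
              exact BT.J'_z_zero _ _ hc
          · right
            rcases ih1 vv ww hK hag hOr with ⟨x, hx⟩ | heq1
            · exact absurd hx (hz1 x)
            rcases ih2 vv ww hK hag hOr with ⟨x, hx⟩ | heq2
            · exact absurd hx (hz2 x)
            rcases ih3 vv ww hK hag hOr with ⟨x, hx⟩ | heq3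
            · exact absurd hx (hz3 ⟨x, hx⟩).elim
            show BT.J' (p1 vv none) (p2 vv none) (p3 vv none) =
              BT.J' (p1 ww none) (p2 ww none) (p3 ww none)
            rw [heq1, heq2, heq3]
  | s1 hp1 hp2 hp3 hp4 ih1 ih2 ih3 ih4 =>
      rename_i p1 p2 p3 p4
      intro vv ww hK hag hOr
      have K2 : InK T m (p2 vv) := polyk_inK hp2 vv hK
      by_cases hz2 : ∃ x, p2 vv (some x) = BT.zero
      · left
        obtain ⟨x, hx⟩ := hz2
        refine ⟨x, ?_⟩
        show BT.S1 (p1 vv (some x)) (p2 vv (some x)) (p3 vv (some x))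
          (p4 vv (some x)) = BT.zero
        rw [hx]
        exact BT.S1_x_zero _ _ _
      · push_neg at hz2
        by_cases hz3 : ∃ x, p3 vv (some x) = BT.zero
        · left
          obtain ⟨x, hx⟩ := hz3
          refine ⟨x, ?_⟩
          show BT.S1 (p1 vv (some x)) (p2 vv (some x)) (p3 vv (some x))
            (p4 vv (some x)) = BT.zero
          rw [hx]
          exact BT.S1_y_zero _ _ _ (hz2 x)
        · push_neg at hz3
          by_cases hz4 : ∃ x, p4 vv (some x) = BT.zero
          · left
            obtain ⟨x, hx⟩ := hz4
            refine ⟨x, ?_⟩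
            show BT.S1 (p1 vv (some x)) (p2 vv (some x)) (p3 vv (some x))
              (p4 vv (some x)) = BT.zero
            rw [hx]
            exact BT.S1_z_zero _ _ _ (hz3 x)
          · by_cases hz1 : ∃ x, p1 vv (some x) = BT.zero
            · left
              obtain ⟨x, hx⟩ := hz1
              refine ⟨x, ?_⟩
              show BT.S1 (p1 vv (some x)) (p2 vv (some x)) (p3 vv (some x))
                (p4 vv (some x)) = BT.zero
              rw [hx]
              exact BT.S1_u_zero _ _ _ ((inK_good K2).1 x)
            · right
              rcases ih1 vv ww hK hag hOr with ⟨x, hx⟩ | heq1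
              · exact absurd hx ((not_exists.1 hz1) x)
              rcases ih2 vv ww hK hag hOr with ⟨x, hx⟩ | heq2
              · exact absurd hx (hz2 x)
              rcases ih3 vv ww hK hag hOr with ⟨x, hx⟩ | heq3
              · exact absurd hx (hz3 x)
              rcases ih4 vv ww hK hag hOr with ⟨x, hx⟩ | heq4
              · exact absurd hx ((not_exists.1 hz4) x)
              show BT.S1 (p1 vv none) (p2 vv none) (p3 vv none) (p4 vv none) =
                BT.S1 (p1 ww none) (p2 ww none) (p3 ww none) (p4 ww none)
              rw [heq1, heq2, heq3, heq4]
  | s2 hp1 hp2 hp3 hp4 hp5 ih1 ih2 ih3 ih4 ih5 =>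
      rename_i p1 p2 p3 p4 p5
      intro vv ww hK hag hOr
      have K3 : InK T m (p3 vv) := polyk_inK hp3 vv hK
      by_cases hz3 : ∃ x, p3 vv (some x) = BT.zero
      · left
        obtain ⟨x, hx⟩ := hz3
        refine ⟨x, ?_⟩
        show BT.S2 (p1 vv (some x)) (p2 vv (some x)) (p3 vv (some x))
          (p4 vv (some x)) (p5 vv (some x)) = BT.zero
        rw [hx]
        exact BT.S2_x_zero _ _ _ _
      · push_neg at hz3
        by_cases hz4 : ∃ x, p4 vv (some x) = BT.zero
        · left
          obtain ⟨x, hx⟩ := hz4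
          refine ⟨x, ?_⟩
          show BT.S2 (p1 vv (some x)) (p2 vv (some x)) (p3 vv (some x))
            (p4 vv (some x)) (p5 vv (some x)) = BT.zero
          rw [hx]
          exact BT.S2_y_zero _ _ _ _ (hz3 x)
        · push_neg at hz4
          by_cases hz5 : ∃ x, p5 vv (some x) = BT.zero
          · left
            obtain ⟨x, hx⟩ := hz5
            refine ⟨x, ?_⟩
            show BT.S2 (p1 vv (some x)) (p2 vv (some x)) (p3 vv (some x))
              (p4 vv (some x)) (p5 vv (some x)) = BT.zero
            rw [hx]
            exact BT.S2_z_zero _ _ _ _ (hz4 x)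
          · by_cases hz2 : ∃ x, p2 vv (some x) = BT.zero
            · left
              obtain ⟨x, hx⟩ := hz2
              refine ⟨x, ?_⟩
              show BT.S2 (p1 vv (some x)) (p2 vv (some x)) (p3 vv (some x))
                (p4 vv (some x)) (p5 vv (some x)) = BT.zero
              rw [hx]
              exact BT.S2_v_zero _ _ _ _ ((inK_good K3).1 x)
            · by_cases hz1 : ∃ x, p1 vv (some x) = BT.zero
              · left
                obtain ⟨x, hx⟩ := hz1
                refine ⟨x, ?_⟩
                show BT.S2 (p1 vv (some x)) (p2 vv (some x)) (p3 vv (some x))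
                  (p4 vv (some x)) (p5 vv (some x)) = BT.zero
                rw [hx]
                exact BT.S2_u_zero _ _ _ _ ((inK_good K3).1 x)
              · right
                rcases ih1 vv ww hK hag hOr with ⟨x, hx⟩ | heq1
                · exact absurd hx ((not_exists.1 hz1) x)
                rcases ih2 vv ww hK hag hOr with ⟨x, hx⟩ | heq2
                · exact absurd hx ((not_exists.1 hz2) x)
                rcases ih3 vv ww hK hag hOr with ⟨x, hx⟩ | heq3
                · exact absurd hx (hz3 x)
                rcases ih4 vv ww hK hag hOr with ⟨x, hx⟩ | heq4
                · exact absurd hx (hz4 x)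
                rcases ih5 vv ww hK hag hOr with ⟨x, hx⟩ | heq5
                · exact absurd hx ((not_exists.1 hz5) x)
                show BT.S2 (p1 vv none) (p2 vv none) (p3 vv none) (p4 vv none)
                  (p5 vv none) = BT.S2 (p1 ww none) (p2 ww none) (p3 ww none)
                  (p4 ww none) (p5 ww none)
                rw [heq1, heq2, heq3, heq4, heq5]
  | mach i hi r t b hp1 hp2 hp3 ih1 ih2 ih3 =>
      rename_i p1 p2 p3
      intro vv ww hK hag hOr
      rcases ih1 vv ww hK hag hOr with ⟨x, hx⟩ | heq1
      · left
        refine ⟨x, ?_⟩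
        show mop T i r t b (p1 vv (some x)) (p2 vv (some x)) (p3 vv (some x)) = BT.zero
        rw [hx]; simp
      rcases ih2 vv ww hK hag hOr with ⟨x, hx⟩ | heq2
      · left
        refine ⟨x, ?_⟩
        show mop T i r t b (p1 vv (some x)) (p2 vv (some x)) (p3 vv (some x)) = BT.zero
        rw [hx]; simp
      rcases ih3 vv ww hK hag hOr with ⟨x, hx⟩ | heq3
      · left
        refine ⟨x, ?_⟩
        show mop T i r t b (p1 vv (some x)) (p2 vv (some x)) (p3 vv (some x)) = BT.zero
        rw [hx]; simp
      right
      show mop T i r t b (p1 vv none) (p2 vv none) (p3 vv none) =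
        mop T i r t b (p1 ww none) (p2 ww none) (p3 ww none)
      rw [heq1, heq2, heq3]
  | u1 i hi r t b hp1 hp2 hp3 hp4 ih1 ih2 ih3 ih4 =>
      rename_i p1 p2 p3 p4
      intro vv ww hK hag hOr
      rcases ih1 vv ww hK hag hOr with ⟨x, hx⟩ | heq1
      · left
        refine ⟨x, ?_⟩
        show U1op (mop T i r t b) (p1 vv (some x)) (p2 vv (some x)) (p3 vv (some x))
          (p4 vv (some x)) = BT.zero
        rw [hx]; simp
      rcases ih2 vv ww hK hag hOr with ⟨x, hx⟩ | heq2
      · left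
        refine ⟨x, ?_⟩
        show U1op (mop T i r t b) (p1 vv (some x)) (p2 vv (some x)) (p3 vv (some x))
          (p4 vv (some x)) = BT.zero
        rw [hx]; simp
      rcases ih3 vv ww hK hag hOr with ⟨x, hx⟩ | heq3
      · left
        refine ⟨x, ?_⟩
        show U1op (mop T i r t b) (p1 vv (some x)) (p2 vv (some x)) (p3 vv (some x))
          (p4 vv (some x)) = BT.zero
        rw [hx]; simp
      rcases ih4 vv ww hK hag hOr with ⟨x, hx⟩ | heq4
      · left
        refine ⟨x, ?_⟩
        show U1op (mop T i r t b) (p1 vv (some x)) (p2 vv (some x)) (p3 vv (some x))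
          (p4 vv (some x)) = BT.zero
        rw [hx]
        exact U1op_zero_u (mop_zero_u T i r t b _ _)
      right
      show U1op (mop T i r t b) (p1 vv none) (p2 vv none) (p3 vv none) (p4 vv none) =
        U1op (mop T i r t b) (p1 ww none) (p2 ww none) (p3 ww none) (p4 ww none)
      rw [heq1, heq2, heq3, heq4]
  | u2 i hi r t b hp1 hp2 hp3 hp4 ih1 ih2 ih3 ih4 =>
      rename_i p1 p2 p3 p4
      intro vv ww hK hag hOr
      rcases ih1 vv ww hK hag hOr with ⟨x, hx⟩ | heq1
      · left
        refine ⟨x, ?_⟩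
        show U2op (mop T i r t b) (p1 vv (some x)) (p2 vv (some x)) (p3 vv (some x))
          (p4 vv (some x)) = BT.zero
        rw [hx]; simp
      rcases ih2 vv ww hK hag hOr with ⟨x, hx⟩ | heq2
      · left
        refine ⟨x, ?_⟩
        show U2op (mop T i r t b) (p1 vv (some x)) (p2 vv (some x)) (p3 vv (some x))
          (p4 vv (some x)) = BT.zero
        rw [hx]; simp
      rcases ih3 vv ww hK hag hOr with ⟨x, hx⟩ | heq3
      · left
        refine ⟨x, ?_⟩
        show U2op (mop T i r t b) (p1 vv (some x)) (p2 vv (some x)) (p3 vv (some x))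
          (p4 vv (some x)) = BT.zero
        rw [hx]; simp
      rcases ih4 vv ww hK hag hOr with ⟨x, hx⟩ | heq4
      · left
        refine ⟨x, ?_⟩
        show U2op (mop T i r t b) (p1 vv (some x)) (p2 vv (some x)) (p3 vv (some x))
          (p4 vv (some x)) = BT.zero
        rw [hx]
        exact U2op_zero_u (mop_zero_u T i r t b _ _)
      right
      show U2op (mop T i r t b) (p1 vv none) (p2 vv none) (p3 vv none) (p4 vv none) =
        U2op (mop T i r t b) (p1 ww none) (p2 ww none) (p3 ww none) (p4 ww none)
      rw [heq1, heq2, heq3, heq4]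

/-- the θ-relation for pairs agreeing on N with a common puncture -/
lemma ML {u v : AA T m} (hu : InK T m u) (hv : InK T m v)
    (hag : ∀ x, u (some x) = v (some x)) (hz : ∃ x, u (some x) = BT.zero) :
    theta T m u v := by
  refine ⟨hu, hv, fun F hF => ?_⟩
  have key := ML_gen hF ![u] ![v]
    (fun i => by rw [Subsingleton.elim i 0]; simpa using hu)
    (fun i x => by rw [Subsingleton.elim i 0]; simpa using hag x)
    (fun i => Or.inl (by
      obtain ⟨x, hx⟩ := hz
      exact ⟨x, by rw [Subsingleton.elim i 0]; simpa using hx⟩))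
  have key2 : (∃ x, F u (some x) = BT.zero) ∨ F u none = F v none := by
    simpa using key
  have hcw : ∀ x, F u (some x) = F v (some x) := fun x => upoly_cw hF (some x) (hag x)
  constructor
  · intro hq
    rcases key2 with ⟨x, hx⟩ | heq
    · exfalso; rw [hq] at hx; exact qEl_some_ne_zero 2 x hx
    · funext y
      cases y with
      | none => rw [← heq]; exact congrFun hq none
      | some x => rw [← hcw x]; exact congrFun hq (some x)
  · intro hq
    rcases key2 with ⟨x, hx⟩ | heq
    · exfalso
      rw [hcw x, hq] at hx
      exact qEl_some_ne_zero 2 x hx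
    · funext y
      cases y with
      | none => rw [heq]; exact congrFun hq none
      | some x => rw [hcw x]; exact congrFun hq (some x)

end MLsec


section Machine
variable {k : ℕ} {T : TM k} {m : ℕ}

/- ---- betaEl values ---- -/

lemma betaEl_none (j : Fin 3) (Q : Cfg k) : betaEl T m j Q none = BT.P j := rfl

lemma betaEl_some_lt {Q : Cfg k} {x : {x : ℤ // x ∈ Nset T m}} (j : Fin 3)
    (h : x.1 < Q.pos) : betaEl T m j Q (some x) =
      BT.C false Q.state (Q.tape Q.pos) (Q.tape x.1) := by
  simp [betaEl, h]

lemma betaEl_some_eq {Q : Cfg k} {x : {x : ℤ // x ∈ Nset T m}} (j : Fin 3)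
    (h : x.1 = Q.pos) : betaEl T m j Q (some x) =
      BT.M false Q.state (Q.tape Q.pos) := by
  simp only [betaEl]
  rw [if_neg (by omega), if_pos h]

lemma betaEl_some_gt {Q : Cfg k} {x : {x : ℤ // x ∈ Nset T m}} (j : Fin 3)
    (h : Q.pos < x.1) : betaEl T m j Q (some x) =
      BT.D false Q.state (Q.tape Q.pos) (Q.tape x.1) := by
  simp only [betaEl]
  rw [if_neg (by omega), if_neg (by omega)]

/- ---- cfgStep equations ---- -/

lemma cfgStep_L {c : Cfg k} (hs : c.state ≠ 0) {s : Bool} {mm : Fin (k+1)}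
    (hI : T.instr c.state (c.tape c.pos) = (s, Dir.L, mm)) :
    cfgStep T c = ⟨Function.update c.tape c.pos s, c.pos - 1, mm⟩ := by
  unfold cfgStep
  rw [if_neg hs, hI]

lemma cfgStep_R {c : Cfg k} (hs : c.state ≠ 0) {s : Bool} {mm : Fin (k+1)}
    (hI : T.instr c.state (c.tape c.pos) = (s, Dir.R, mm)) :
    cfgStep T c = ⟨Function.update c.tape c.pos s, c.pos + 1, mm⟩ := by
  unfold cfgStep
  rw [if_neg hs, hI]

/- ---- uniqueness of preimages ---- -/

lemma Lop_rev_P {i : Fin (k+1)} {r s : Bool} {mm : Fin (k+1)} {t : Bool}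
    {v' : BT k} {j : Fin 3} (h : BT.Lop i r s mm t BT.one BT.one v' = BT.P j) :
    v' = BT.P j := BT.Lop_eq_P h

lemma Rop_rev_P {i : Fin (k+1)} {r s : Bool} {mm : Fin (k+1)} {t : Bool}
    {v' : BT k} {j : Fin 3} (h : BT.Rop i r s mm t BT.one BT.one v' = BT.P j) :
    v' = BT.P j := BT.Rop_eq_P h

lemma Lop_rev_a {i : Fin (k+1)} {r s : Bool} {mm : Fin (k+1)} {t w : Bool}
    {v' : BT k} (h : BT.Lop i r s mm t BT.one BT.one v' = BT.C false mm t w) :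
    v' = BT.C false i r w := by
  cases v' <;> unfold BT.Lop at h <;> (repeat' split at h) <;> simp_all

lemma Lop_rev_b {i : Fin (k+1)} {r s : Bool} {mm : Fin (k+1)} {t : Bool}
    {v' : BT k} (h : BT.Lop i r s mm t BT.H BT.one v' = BT.M false mm t) :
    v' = BT.C false i r t := by
  cases v' <;> unfold BT.Lop at h <;> (repeat' split at h) <;> simp_all

lemma Lop_rev_c {i : Fin (k+1)} {r s : Bool} {mm : Fin (k+1)} {t : Bool}
    {v' : BT k} (h : BT.Lop i r s mm t BT.two BT.H v' = BT.D false mm t s) :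
    v' = BT.M false i r := by
  cases v' <;> unfold BT.Lop at h <;> (repeat' split at h) <;> simp_all

lemma Lop_rev_d {i : Fin (k+1)} {r s : Bool} {mm : Fin (k+1)} {t w : Bool}
    {v' : BT k} (h : BT.Lop i r s mm t BT.two BT.two v' = BT.D false mm t w) :
    v' = BT.D false i r w := by
  cases v' <;> unfold BT.Lop at h <;> (repeat' split at h) <;> simp_all

lemma Rop_rev_a {i : Fin (k+1)} {r s : Bool} {mm : Fin (k+1)} {t w : Bool}
    {v' : BT k} (h : BT.Rop i r s mm t BT.one BT.one v' = BT.C false mm t w) :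
    v' = BT.C false i r w := by
  cases v' <;> unfold BT.Rop at h <;> (repeat' split at h) <;> simp_all

lemma Rop_rev_b {i : Fin (k+1)} {r s : Bool} {mm : Fin (k+1)} {t : Bool}
    {v' : BT k} (h : BT.Rop i r s mm t BT.H BT.one v' = BT.C false mm t s) :
    v' = BT.M false i r := by
  cases v' <;> unfold BT.Rop at h <;> (repeat' split at h) <;> simp_all

lemma Rop_rev_c {i : Fin (k+1)} {r s : Bool} {mm : Fin (k+1)} {t : Bool}
    {v' : BT k} (h : BT.Rop i r s mm t BT.two BT.H v' = BT.M false mm t) :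
    v' = BT.D false i r t := by
  cases v' <;> unfold BT.Rop at h <;> (repeat' split at h) <;> simp_all

lemma Rop_rev_d {i : Fin (k+1)} {r s : Bool} {mm : Fin (k+1)} {t w : Bool}
    {v' : BT k} (h : BT.Rop i r s mm t BT.two BT.two v' = BT.D false mm t w) :
    v' = BT.D false i r w := by
  cases v' <;> unfold BT.Rop at h <;> (repeat' split at h) <;> simp_all

/- ---- simulation: left moves ---- -/

lemma simL_fwd (Q : Cfg k) (s : Bool) (mm : Fin (k+1)) (j : Fin 3)
    (y : Option {x : ℤ // x ∈ Nset T m}) :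
    BT.Lop Q.state (Q.tape Q.pos) s mm (Q.tape (Q.pos - 1))
      (aEl T m (Q.pos - 1) y) (aEl T m Q.pos y) (betaEl T m j Q y) =
    betaEl T m j ⟨Function.update Q.tape Q.pos s, Q.pos - 1, mm⟩ y := by
  cases y with
  | none =>
    show BT.Lop _ _ _ _ _ BT.one BT.one (BT.P j) = BT.P j
    simp [BT.Lop]
  | some x =>
    rcases lt_trichotomy x.1 (Q.pos - 1) with hx | hx | hx
    · rw [aEl_some_lt hx, aEl_some_lt (by omega), betaEl_some_lt j (by omega),
        betaEl_some_lt (Q := ⟨Function.update Q.tape Q.pos s, Q.pos - 1, mm⟩) j hx]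
      show BT.Lop _ _ _ _ _ _ _ _ =
        BT.C false mm (Function.update Q.tape Q.pos s (Q.pos - 1))
          (Function.update Q.tape Q.pos s x.1)
      rw [Function.update_of_ne (by omega), Function.update_of_ne (by omega)]
      simp [BT.Lop]
    · rw [aEl_some_eq hx, aEl_some_lt (by omega), betaEl_some_lt j (by omega),
        betaEl_some_eq (Q := ⟨Function.update Q.tape Q.pos s, Q.pos - 1, mm⟩) j hx]
      show BT.Lop _ _ _ _ _ _ _ _ =
        BT.M false mm (Function.update Q.tape Q.pos s (Q.pos - 1))
      rw [Function.update_of_ne (by omega), hx]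
      simp [BT.Lop]
    · rcases (by omega : x.1 = Q.pos ∨ Q.pos < x.1) with hx' | hx'
      · rw [aEl_some_gt (by omega), aEl_some_eq hx', betaEl_some_eq j hx',
          betaEl_some_gt (Q := ⟨Function.update Q.tape Q.pos s, Q.pos - 1, mm⟩) j hx]
        show BT.Lop _ _ _ _ _ _ _ _ =
          BT.D false mm (Function.update Q.tape Q.pos s (Q.pos - 1))
            (Function.update Q.tape Q.pos s x.1)
        rw [Function.update_of_ne (by omega), hx', Function.update_self]
        simp [BT.Lop]
      · rw [aEl_some_gt (by omega), aEl_some_gt hx', betaEl_some_gt j hx',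
          betaEl_some_gt (Q := ⟨Function.update Q.tape Q.pos s, Q.pos - 1, mm⟩) j hx]
        show BT.Lop _ _ _ _ _ _ _ _ =
          BT.D false mm (Function.update Q.tape Q.pos s (Q.pos - 1))
            (Function.update Q.tape Q.pos s x.1)
        rw [Function.update_of_ne (by omega), Function.update_of_ne (by omega)]
        simp [BT.Lop]

lemma simL_rev (Q : Cfg k) (s : Bool) (mm : Fin (k+1)) (j : Fin 3)
    (y : Option {x : ℤ // x ∈ Nset T m}) :
    revOp (BT.Lop Q.state (Q.tape Q.pos) s mm (Q.tape (Q.pos - 1)))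
      (aEl T m (Q.pos - 1) y) (aEl T m Q.pos y)
      (betaEl T m j ⟨Function.update Q.tape Q.pos s, Q.pos - 1, mm⟩ y) =
    betaEl T m j Q y := by
  have hfwd := simL_fwd (T := T) (m := m) Q s mm j y
  cases y with
  | none =>
    rw [betaEl_none]
    exact revOp_eq (by rw [← betaEl_none (T := T) (m := m) j Q]; exact hfwd)
      (by simp) (fun v' hv' => Lop_rev_P hv')
  | some x =>
    rcases lt_trichotomy x.1 (Q.pos - 1) with hx | hx | hx
    · rw [betaEl_some_lt (Q := ⟨Function.update Q.tape Q.pos s, Q.pos - 1, mm⟩) j hx]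
        at hfwd ⊢
      dsimp only at hfwd ⊢
      rw [betaEl_some_lt j (show x.1 < Q.pos by omega)] at hfwd ⊢
      rw [aEl_some_lt hx, aEl_some_lt (by omega)] at hfwd ⊢
      rw [Function.update_of_ne (show (Q.pos - 1 : ℤ) ≠ Q.pos by omega),
        Function.update_of_ne (show (x.1 : ℤ) ≠ Q.pos by omega)] at hfwd ⊢
      exact revOp_eq hfwd (by simp) (fun v' hv' => Lop_rev_a hv')
    · rw [betaEl_some_eq (Q := ⟨Function.update Q.tape Q.pos s, Q.pos - 1, mm⟩) j hx]
        at hfwd ⊢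
      dsimp only at hfwd ⊢
      rw [betaEl_some_lt j (show x.1 < Q.pos by omega)] at hfwd ⊢
      rw [aEl_some_eq hx, aEl_some_lt (by omega)] at hfwd ⊢
      rw [Function.update_of_ne (show (Q.pos - 1 : ℤ) ≠ Q.pos by omega)] at hfwd ⊢
      rw [hx] at hfwd ⊢
      exact revOp_eq hfwd (by simp) (fun v' hv' => Lop_rev_b hv')
    · rcases (by omega : x.1 = Q.pos ∨ Q.pos < x.1) with hx' | hx'
      · rw [betaEl_some_gt (Q := ⟨Function.update Q.tape Q.pos s, Q.pos - 1, mm⟩) j hx]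
          at hfwd ⊢
        dsimp only at hfwd ⊢
        rw [betaEl_some_eq j hx'] at hfwd ⊢
        rw [aEl_some_gt (by omega), aEl_some_eq hx'] at hfwd ⊢
        rw [Function.update_of_ne (show (Q.pos - 1 : ℤ) ≠ Q.pos by omega)] at hfwd ⊢
        rw [hx', Function.update_self] at hfwd ⊢
        exact revOp_eq hfwd (by simp) (fun v' hv' => Lop_rev_c hv')
      · rw [betaEl_some_gt (Q := ⟨Function.update Q.tape Q.pos s, Q.pos - 1, mm⟩) j hx]
          at hfwd ⊢
        dsimp only at hfwd ⊢
        rw [betaEl_some_gt j hx'] at hfwd ⊢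
        rw [aEl_some_gt (by omega), aEl_some_gt hx'] at hfwd ⊢
        rw [Function.update_of_ne (show (Q.pos - 1 : ℤ) ≠ Q.pos by omega),
          Function.update_of_ne (show (x.1 : ℤ) ≠ Q.pos by omega)] at hfwd ⊢
        exact revOp_eq hfwd (by simp) (fun v' hv' => Lop_rev_d hv')

/- ---- simulation: right moves ---- -/

lemma simR_fwd (Q : Cfg k) (s : Bool) (mm : Fin (k+1)) (j : Fin 3)
    (y : Option {x : ℤ // x ∈ Nset T m}) :
    BT.Rop Q.state (Q.tape Q.pos) s mm (Q.tape (Q.pos + 1))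
      (aEl T m Q.pos y) (aEl T m (Q.pos + 1) y) (betaEl T m j Q y) =
    betaEl T m j ⟨Function.update Q.tape Q.pos s, Q.pos + 1, mm⟩ y := by
  cases y with
  | none =>
    show BT.Rop _ _ _ _ _ BT.one BT.one (BT.P j) = BT.P j
    simp [BT.Rop]
  | some x =>
    rcases lt_trichotomy x.1 Q.pos with hx | hx | hx
    · rw [aEl_some_lt hx, aEl_some_lt (by omega), betaEl_some_lt j hx,
        betaEl_some_lt (Q := ⟨Function.update Q.tape Q.pos s, Q.pos + 1, mm⟩) j
          (show x.1 < Q.pos + 1 by omega)]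
      show BT.Rop _ _ _ _ _ _ _ _ =
        BT.C false mm (Function.update Q.tape Q.pos s (Q.pos + 1))
          (Function.update Q.tape Q.pos s x.1)
      rw [Function.update_of_ne (by omega), Function.update_of_ne (by omega)]
      simp [BT.Rop]
    · rw [aEl_some_eq hx, aEl_some_lt (by omega), betaEl_some_eq j hx,
        betaEl_some_lt (Q := ⟨Function.update Q.tape Q.pos s, Q.pos + 1, mm⟩) j
          (show x.1 < Q.pos + 1 by omega)]
      show BT.Rop _ _ _ _ _ _ _ _ =
        BT.C false mm (Function.update Q.tape Q.pos s (Q.pos + 1))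
          (Function.update Q.tape Q.pos s x.1)
      rw [Function.update_of_ne (by omega), hx, Function.update_self]
      simp [BT.Rop]
    · rcases (by omega : x.1 = Q.pos + 1 ∨ Q.pos + 1 < x.1) with hx' | hx'
      · rw [aEl_some_gt (by omega), aEl_some_eq hx', betaEl_some_gt j hx,
          betaEl_some_eq (Q := ⟨Function.update Q.tape Q.pos s, Q.pos + 1, mm⟩) j hx']
        show BT.Rop _ _ _ _ _ _ _ _ =
          BT.M false mm (Function.update Q.tape Q.pos s (Q.pos + 1))
        rw [Function.update_of_ne (by omega), hx']
        simp [BT.Rop]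
      · rw [aEl_some_gt (by omega), aEl_some_gt hx', betaEl_some_gt j hx,
          betaEl_some_gt (Q := ⟨Function.update Q.tape Q.pos s, Q.pos + 1, mm⟩) j
            (show Q.pos + 1 < x.1 by omega)]
        show BT.Rop _ _ _ _ _ _ _ _ =
          BT.D false mm (Function.update Q.tape Q.pos s (Q.pos + 1))
            (Function.update Q.tape Q.pos s x.1)
        rw [Function.update_of_ne (by omega), Function.update_of_ne (by omega)]
        simp [BT.Rop]

lemma simR_rev (Q : Cfg k) (s : Bool) (mm : Fin (k+1)) (j : Fin 3)
    (y : Option {x : ℤ // x ∈ Nset T m}) :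
    revOp (BT.Rop Q.state (Q.tape Q.pos) s mm (Q.tape (Q.pos + 1)))
      (aEl T m Q.pos y) (aEl T m (Q.pos + 1) y)
      (betaEl T m j ⟨Function.update Q.tape Q.pos s, Q.pos + 1, mm⟩ y) =
    betaEl T m j Q y := by
  have hfwd := simR_fwd (T := T) (m := m) Q s mm j y
  cases y with
  | none =>
    rw [betaEl_none]
    exact revOp_eq (by rw [← betaEl_none (T := T) (m := m) j Q]; exact hfwd)
      (by simp) (fun v' hv' => Rop_rev_P hv')
  | some x =>
    rcases lt_trichotomy x.1 Q.pos with hx | hx | hx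
    · rw [betaEl_some_lt (Q := ⟨Function.update Q.tape Q.pos s, Q.pos + 1, mm⟩) j
        (show x.1 < Q.pos + 1 by omega)] at hfwd ⊢
      dsimp only at hfwd ⊢
      rw [betaEl_some_lt j hx] at hfwd ⊢
      rw [aEl_some_lt hx, aEl_some_lt (by omega)] at hfwd ⊢
      rw [Function.update_of_ne (show (Q.pos + 1 : ℤ) ≠ Q.pos by omega),
        Function.update_of_ne (show (x.1 : ℤ) ≠ Q.pos by omega)] at hfwd ⊢
      exact revOp_eq hfwd (by simp) (fun v' hv' => Rop_rev_a hv')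
    · rw [betaEl_some_lt (Q := ⟨Function.update Q.tape Q.pos s, Q.pos + 1, mm⟩) j
        (show x.1 < Q.pos + 1 by omega)] at hfwd ⊢
      dsimp only at hfwd ⊢
      rw [betaEl_some_eq j hx] at hfwd ⊢
      rw [aEl_some_eq hx, aEl_some_lt (by omega)] at hfwd ⊢
      rw [Function.update_of_ne (show (Q.pos + 1 : ℤ) ≠ Q.pos by omega)] at hfwd ⊢
      rw [hx, Function.update_self] at hfwd ⊢
      exact revOp_eq hfwd (by simp) (fun v' hv' => Rop_rev_b hv')
    · rcases (by omega : x.1 = Q.pos + 1 ∨ Q.pos + 1 < x.1) with hx' | hx'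
      · rw [betaEl_some_eq (Q := ⟨Function.update Q.tape Q.pos s, Q.pos + 1, mm⟩) j hx']
          at hfwd ⊢
        dsimp only at hfwd ⊢
        rw [betaEl_some_gt j hx] at hfwd ⊢
        rw [aEl_some_gt (by omega), aEl_some_eq hx'] at hfwd ⊢
        rw [Function.update_of_ne (show (Q.pos + 1 : ℤ) ≠ Q.pos by omega)] at hfwd ⊢
        rw [hx'] at hfwd ⊢
        exact revOp_eq hfwd (by simp) (fun v' hv' => Rop_rev_c hv')
      · rw [betaEl_some_gt (Q := ⟨Function.update Q.tape Q.pos s, Q.pos + 1, mm⟩) j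
          (show Q.pos + 1 < x.1 by omega)] at hfwd ⊢
        dsimp only at hfwd ⊢
        rw [betaEl_some_gt j hx] at hfwd ⊢
        rw [aEl_some_gt (by omega), aEl_some_gt hx'] at hfwd ⊢
        rw [Function.update_of_ne (show (Q.pos + 1 : ℤ) ≠ Q.pos by omega),
          Function.update_of_ne (show (x.1 : ℤ) ≠ Q.pos by omega)] at hfwd ⊢
        exact revOp_eq hfwd (by simp) (fun v' hv' => Rop_rev_d hv')

/-- combined simulation step -/
lemma sim_step {c : Cfg k} (hs : c.state ≠ 0) :
    ∃ n₁ n₂ : ℤ, (n₁ = c.pos ∨ n₁ = (cfgStep T c).pos) ∧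
      (n₂ = c.pos ∨ n₂ = (cfgStep T c).pos) ∧
      (∀ (j : Fin 3) y, fwd T c.state (c.tape c.pos)
          ((cfgStep T c).tape ((cfgStep T c).pos))
          (aEl T m n₁ y) (aEl T m n₂ y) (betaEl T m j c y) =
        betaEl T m j (cfgStep T c) y) ∧
      (∀ (j : Fin 3) y, revOp (fwd T c.state (c.tape c.pos)
          ((cfgStep T c).tape ((cfgStep T c).pos)))
          (aEl T m n₁ y) (aEl T m n₂ y) (betaEl T m j (cfgStep T c) y) =
        betaEl T m j c y) := by
  rcases hI : T.instr c.state (c.tape c.pos) with ⟨s, D, mm⟩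
  cases D with
  | L =>
    have hE : fwd T c.state (c.tape c.pos) = BT.Lop c.state (c.tape c.pos) s mm := by
      unfold fwd; rw [hI]
    have hstep : cfgStep T c = ⟨Function.update c.tape c.pos s, c.pos - 1, mm⟩ :=
      cfgStep_L hs hI
    have ht : (cfgStep T c).tape ((cfgStep T c).pos) = c.tape (c.pos - 1) := by
      rw [hstep]
      dsimp only
      exact Function.update_of_ne (by omega) _ _
    refine ⟨c.pos - 1, c.pos, Or.inr (by rw [hstep]), Or.inl rfl, ?_, ?_⟩
    · intro j y
      rw [ht, hstep, hE]
      exact simL_fwd c s mm j y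
    · intro j y
      rw [ht, hstep, hE]
      exact simL_rev c s mm j y
  | R =>
    have hE : fwd T c.state (c.tape c.pos) = BT.Rop c.state (c.tape c.pos) s mm := by
      unfold fwd; rw [hI]
    have hstep : cfgStep T c = ⟨Function.update c.tape c.pos s, c.pos + 1, mm⟩ :=
      cfgStep_R hs hI
    have ht : (cfgStep T c).tape ((cfgStep T c).pos) = c.tape (c.pos + 1) := by
      rw [hstep]
      dsimp only
      exact Function.update_of_ne (by omega) _ _
    refine ⟨c.pos, c.pos + 1, Or.inl rfl, Or.inr (by rw [hstep]), ?_, ?_⟩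
    · intro j y
      rw [ht, hstep, hE]
      exact simR_fwd c s mm j y
    · intro j y
      rw [ht, hstep, hE]
      exact simR_rev c s mm j y

end Machine


section Chain
variable {k : ℕ} {T : TM k} {m : ℕ}

lemma T0_C0 {i : Fin (k+1)} (h0 : i = 0) (r s : Bool) :
    BT.T0 (BT.C false i r s) = BT.C false i r s := by subst h0; simp [BT.T0]

lemma T0_M0 {i : Fin (k+1)} (h0 : i = 0) (r : Bool) :
    BT.T0 (BT.M false i r) = BT.M false i r := by subst h0; simp [BT.T0]

lemma T0_D0 {i : Fin (k+1)} (h0 : i = 0) (r s : Bool) :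
    BT.T0 (BT.D false i r s) = BT.D false i r s := by subst h0; simp [BT.T0]

lemma chain_step {R : AA T m → AA T m → Prop} (hR : IsCongK T m R) {c : Cfg k}
    (hs : c.state ≠ 0) (h1 : c.pos ∈ Nset T m) (h2 : (cfgStep T c).pos ∈ Nset T m)
    (j j' : Fin 3) :
    (R (betaEl T m j c) (betaEl T m j' c) →
      R (betaEl T m j (cfgStep T c)) (betaEl T m j' (cfgStep T c))) ∧
    (R (betaEl T m j (cfgStep T c)) (betaEl T m j' (cfgStep T c)) →
      R (betaEl T m j c) (betaEl T m j' c)) := by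
  obtain ⟨n₁, n₂, hn₁o, hn₂o, hfwd, hrev⟩ := sim_step (T := T) (m := m) hs
  have hn₁ : n₁ ∈ Nset T m := by rcases hn₁o with rfl|rfl; exacts [h1, h2]
  have hn₂ : n₂ ∈ Nset T m := by rcases hn₂o with rfl|rfl; exacts [h1, h2]
  constructor
  · intro h
    have hPoly : UPolyK T m (fun w y => mop T c.state (c.tape c.pos)
        ((cfgStep T c).tape ((cfgStep T c).pos)) false
        (aEl T m n₁ y) (aEl T m n₂ y) (w y)) :=
      PolyK.mach _ hs _ _ false (PolyK.const _ (InK.gen_a n₁ hn₁))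
        (PolyK.const _ (InK.gen_a n₂ hn₂)) (PolyK.proj 0)
    have happ := upoly_resp hR hPoly h
    have e1 : (fun y => mop T c.state (c.tape c.pos)
        ((cfgStep T c).tape ((cfgStep T c).pos)) false
        (aEl T m n₁ y) (aEl T m n₂ y) (betaEl T m j c y)) =
        betaEl T m j (cfgStep T c) := funext fun y => hfwd j y
    have e2 : (fun y => mop T c.state (c.tape c.pos)
        ((cfgStep T c).tape ((cfgStep T c).pos)) false
        (aEl T m n₁ y) (aEl T m n₂ y) (betaEl T m j' c y)) =
        betaEl T m j' (cfgStep T c) := funext fun y => hfwd j' y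
    rw [← e1, ← e2]
    exact happ
  · intro h
    have hPoly : UPolyK T m (fun w y => mop T c.state (c.tape c.pos)
        ((cfgStep T c).tape ((cfgStep T c).pos)) true
        (aEl T m n₁ y) (aEl T m n₂ y) (w y)) :=
      PolyK.mach _ hs _ _ true (PolyK.const _ (InK.gen_a n₁ hn₁))
        (PolyK.const _ (InK.gen_a n₂ hn₂)) (PolyK.proj 0)
    have happ := upoly_resp hR hPoly h
    have e1 : (fun y => mop T c.state (c.tape c.pos)
        ((cfgStep T c).tape ((cfgStep T c).pos)) true
        (aEl T m n₁ y) (aEl T m n₂ y) (betaEl T m j (cfgStep T c) y)) =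
        betaEl T m j c := funext fun y => hrev j y
    have e2 : (fun y => mop T c.state (c.tape c.pos)
        ((cfgStep T c).tape ((cfgStep T c).pos)) true
        (aEl T m n₁ y) (aEl T m n₂ y) (betaEl T m j' (cfgStep T c) y)) =
        betaEl T m j' c := funext fun y => hrev j' y
    rw [← e1, ← e2]
    exact happ

lemma qEl_eq_betaEl (j : Fin 3) : qEl T m j = betaEl T m j (Q0 k) := by
  funext y
  cases y with
  | none => rfl
  | some x => rfl

lemma q1_case (hm : ((cfgStep T)^[m] (Q0 k)).state = 0)
    {R : AA T m → AA T m → Prop} (hR : IsCongK T m R)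
    (h12 : R (qEl T m 1) (qEl T m 2)) : R (qEl T m 0) (qEl T m 2) := by
  have hex : ∃ j, ((cfgStep T)^[j] (Q0 k)).state = 0 := ⟨m, hm⟩
  have hm₀m : Nat.find hex ≤ m := Nat.find_min' hex hm
  have hstop : ((cfgStep T)^[Nat.find hex] (Q0 k)).state = 0 := Nat.find_spec hex
  have hrun : ∀ l, l < Nat.find hex → ((cfgStep T)^[l] (Q0 k)).state ≠ 0 :=
    fun l hl => Nat.find_min hex hl
  have hposmem : ∀ l, l ≤ m → ((cfgStep T)^[l] (Q0 k)).pos ∈ Nset T m :=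
    fun l hl => pos_mem_Nset hl
  -- forward chain
  have fwdchain : ∀ l, l ≤ Nat.find hex →
      R (betaEl T m 1 ((cfgStep T)^[l] (Q0 k)))
        (betaEl T m 2 ((cfgStep T)^[l] (Q0 k))) := by
    intro l
    induction l with
    | zero =>
      intro _
      rw [Function.iterate_zero_apply, ← qEl_eq_betaEl 1, ← qEl_eq_betaEl 2]
      exact h12
    | succ l ih =>
      intro hl
      have hp2 : (cfgStep T ((cfgStep T)^[l] (Q0 k))).pos ∈ Nset T m := by
        rw [← Function.iterate_succ_apply' (cfgStep T) l (Q0 k)]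
        exact hposmem (l+1) (by omega)
      rw [Function.iterate_succ_apply']
      exact (chain_step hR (hrun l (by omega)) (hposmem l (by omega)) hp2 1 2).1
        (ih (by omega))
  -- T0 transfer at the halting configuration
  have hT0b : ∀ (jj jj' : Fin 3), BT.T0 (BT.P jj) = (BT.P jj' : BT k) →
      (fun y => BT.T0 (betaEl T m jj ((cfgStep T)^[Nat.find hex] (Q0 k)) y)) =
      betaEl T m jj' ((cfgStep T)^[Nat.find hex] (Q0 k)) := by
    intro jj jj' hj
    funext y
    cases y with
    | none => exact hj
    | some x =>
      rcases lt_trichotomy x.1 ((cfgStep T)^[Nat.find hex] (Q0 k)).pos with h|h|h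
      · rw [betaEl_some_lt jj h, betaEl_some_lt jj' h, T0_C0 hstop]
      · rw [betaEl_some_eq jj h, betaEl_some_eq jj' h, T0_M0 hstop]
      · rw [betaEl_some_gt jj h, betaEl_some_gt jj' h, T0_D0 hstop]
  have hhalt := hR.t0 (fwdchain (Nat.find hex) le_rfl)
  rw [hT0b 1 0 (by simp [BT.T0]), hT0b 2 2 (by simp [BT.T0])] at hhalt
  -- backward chain
  have backchain : ∀ d, d ≤ Nat.find hex →
      R (betaEl T m 0 ((cfgStep T)^[Nat.find hex - d] (Q0 k)))
        (betaEl T m 2 ((cfgStep T)^[Nat.find hex - d] (Q0 k))) := by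
    intro d
    induction d with
    | zero =>
      intro _
      simpa using hhalt
    | succ d ih =>
      intro hd
      have ihd := ih (by omega)
      have hmeq : Nat.find hex - d = (Nat.find hex - (d+1)) + 1 := by omega
      rw [hmeq, Function.iterate_succ_apply'] at ihd
      have hp2 : (cfgStep T ((cfgStep T)^[Nat.find hex - (d+1)] (Q0 k))).pos ∈
          Nset T m := by
        rw [← Function.iterate_succ_apply' (cfgStep T) (Nat.find hex - (d+1)) (Q0 k)]
        exact hposmem _ (by omega)
      exact (chain_step hR (hrun _ (by omega)) (hposmem _ (by omega)) hp2 0 2).2 ihd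
  have hfinal := backchain (Nat.find hex) le_rfl
  rw [Nat.sub_self] at hfinal
  rw [qEl_eq_betaEl 0, qEl_eq_betaEl 2]
  simpa using hfinal

end Chain


namespace BT
variable {k : ℕ}

lemma meet_V_cases {a b : BT k} (hP : isP a = false) :
    meet a b = a ∨ meet a b = zero := by
  unfold meet; split_ifs with h1 h2 h3 h4
  · left; rfl
  · rcases h2 with ⟨rfl, -⟩; simp [isP] at hP
  · rcases h3 with ⟨-, rfl|rfl⟩ <;> simp [isP] at hP
  · rcases h4 with ⟨rfl|rfl, -⟩ <;> simp [isP] at hP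
  · right; rfl

lemma meet_P2_cases (b : BT k) : meet (P 2) b = P 2 ∨ meet (P 2) b = zero := by
  unfold meet; split_ifs with h1 h2 h3 h4
  · left; rw [h1]
  · left; rfl
  · left; rfl
  · left; rfl
  · right; rfl

end BT

section KeyC
variable {k : ℕ} {T : TM k} {m : ℕ}

lemma keyC (hm : ((cfgStep T)^[m] (Q0 k)).state = 0)
    {R : AA T m → AA T m → Prop} (hR : IsCongK T m R)
    (hθR : ∀ a b, theta T m a b → R a b)
    {h : AA T m} (hRh : R (qEl T m 2) h) (hne : h ≠ qEl T m 2) :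
    R (qEl T m 0) (qEl T m 2) := by
  have hhK : InK T m h := (hR.dom hRh).2
  have hFmeet : UPolyK T m (fun w y => BT.meet (qEl T m 2 y) (w y)) :=
    PolyK.meet (PolyK.const _ (InK.gen_q 2)) (PolyK.proj 0)
  have hmq : (fun y => BT.meet (qEl T m 2 y) (qEl T m 2 y)) = qEl T m 2 := by
    funext y; simp
  have h1R : R (qEl T m 2) (fun y => BT.meet (qEl T m 2 y) (h y)) := by
    have h' := upoly_resp hR hFmeet hRh
    rwa [hmq] at h'
  set h₁ : AA T m := fun y => BT.meet (qEl T m 2 y) (h y) with hh₁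
  have h₁K : InK T m h₁ := InK.meet (InK.gen_q 2) hhK
  by_cases hcase : h₁ = qEl T m 2
  · have hcoord : ∀ y, BT.meet (qEl T m 2 y) (h y) = qEl T m 2 y :=
      fun y => congrFun hcase y
    have hN : ∀ x, h (some x) = qEl T m 2 (some x) := fun x =>
      BT.meet_eq_left (hcoord (some x)) (isP_qEl_some 2 x) (qEl_some_ne_zero 2 x)
    have hs₀' : h none = BT.P 0 ∨ h none = BT.P 1 ∨ h none = BT.P 2 :=
      BT.meet_P2_inv (hcoord none)
    rcases hs₀' with h0 | h0 | h0
    · have he : h = qEl T m 0 := by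
        funext y
        cases y with
        | none => rw [h0]; rfl
        | some x => rw [hN x]; exact qEl_some_agree 2 0 x
      rw [← he]
      exact hR.symm hRh
    · have he : h = qEl T m 1 := by
        funext y
        cases y with
        | none => rw [h0]; rfl
        | some x => rw [hN x]; exact qEl_some_agree 2 1 x
      rw [he] at hRh
      exact q1_case hm hR (hR.symm hRh)
    · exfalso
      apply hne
      funext y
      cases y with
      | none => rw [h0]; rfl
      | some x => rw [hN x]
  · have hval : ∀ x, h₁ (some x) = qEl T m 2 (some x) ∨ h₁ (some x) = BT.zero := by
      intro x
      rcases BT.meet_V_cases (b := h (some x)) (isP_qEl_some 2 x) with hv | hv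
      · left; exact hv
      · right; exact hv
    have hs₀val : h₁ none = BT.P 2 ∨ h₁ none = BT.zero := BT.meet_P2_cases (h none)
    by_cases hpunct : ∃ x, h₁ (some x) = BT.zero
    · obtain ⟨x₀, hx₀⟩ := hpunct
      have hFJ : UPolyK T m (fun w y => BT.J' (qEl T m 0 y) (w y) (qEl T m 0 y)) :=
        PolyK.jop (PolyK.const _ (InK.gen_q 0)) (PolyK.proj 0)
          (PolyK.const _ (InK.gen_q 0))
      have hJq2 : (fun y => BT.J' (qEl T m 0 y) (qEl T m 2 y) (qEl T m 0 y)) =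
          qEl T m 0 := by
        funext y
        cases y with
        | none =>
          show BT.J' (BT.P 0) (BT.P 2) (BT.P 0) = BT.P 0
          unfold BT.J'
          rw [if_pos (Or.inr ⟨rfl, rfl⟩)]
          exact BT.meet_self _
        | some x =>
          show BT.J' (qEl T m 0 (some x)) (qEl T m 2 (some x)) (qEl T m 0 (some x)) =
            qEl T m 0 (some x)
          rw [qEl_some_agree 2 0 x]
          unfold BT.J'
          rw [if_pos (Or.inl rfl)]
          exact BT.meet_self _
      set g₁ : AA T m := fun y => BT.J' (qEl T m 0 y) (h₁ y) (qEl T m 0 y) with hg₁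
      have hRg : R (qEl T m 0) g₁ := by
        have h' := upoly_resp hR hFJ h1R
        rwa [hJq2] at h'
      have hgN : ∀ x, g₁ (some x) = h₁ (some x) := by
        intro x
        rcases hval x with he | he
        · rw [hg₁]
          show BT.J' (qEl T m 0 (some x)) (h₁ (some x)) (qEl T m 0 (some x)) =
            h₁ (some x)
          rw [he, qEl_some_agree 2 0 x]
          unfold BT.J'
          rw [if_pos (Or.inl rfl)]
          exact BT.meet_self _
        · rw [hg₁]
          show BT.J' (qEl T m 0 (some x)) (h₁ (some x)) (qEl T m 0 (some x)) =
            h₁ (some x)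
          rw [he]
          simp
      have hgK : InK T m g₁ := InK.jop (InK.gen_q 0) h₁K (InK.gen_q 0)
      have hθ : theta T m g₁ h₁ :=
        ML hgK h₁K hgN ⟨x₀, by rw [hgN x₀]; exact hx₀⟩
      exact hR.trans (hR.trans hRg (hθR _ _ hθ)) (hR.symm h1R)
    · push_neg at hpunct
      have hNfull : ∀ x, h₁ (some x) = qEl T m 2 (some x) := by
        intro x
        rcases hval x with hv | hv
        · exact hv
        · exact absurd hv (hpunct x)
      have hs0 : h₁ none = BT.zero := by
        rcases hs₀val with he | he
        · exfalso
          apply hcase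
          funext y
          cases y with
          | none => rw [he]; rfl
          | some x => exact hNfull x
        · exact he
      have hFT1 : UPolyK T m (fun w y => BT.T1 (w y) (qEl T m 0 y)) :=
        PolyK.t1 (PolyK.proj 0) (PolyK.const _ (InK.gen_q 0))
      have hT1V : ∀ x : {x : ℤ // x ∈ Nset T m},
          BT.T1 (qEl T m 2 (some x)) (qEl T m 0 (some x)) = qEl T m 2 (some x) := by
        intro x
        have hP := isP_qEl_some 2 x
        rw [qEl_some_agree 0 2 x]
        set a := qEl T m 2 (some x) with ha
        have hn1 : ¬((a = BT.P 0 ∧ a = BT.P 0) ∨ (a = BT.P 0 ∧ a = BT.P 1) ∨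
            (a = BT.P 1 ∧ a = BT.P 0) ∨ (a = BT.P 0 ∧ a = BT.P 2) ∨
            (a = BT.P 2 ∧ a = BT.P 0)) := by
          rintro (⟨hh,-⟩|⟨hh,-⟩|⟨hh,-⟩|⟨hh,-⟩|⟨hh,-⟩) <;>
            (rw [hh] at hP; simp [BT.isP] at hP)
        have hn2 : ¬((a = BT.P 1 ∨ a = BT.P 2) ∧ (a = BT.P 1 ∨ a = BT.P 2)) := by
          rintro ⟨hh|hh, -⟩ <;> (rw [hh] at hP; simp [BT.isP] at hP)
        unfold BT.T1
        rw [if_neg hn1, if_neg hn2, if_pos ⟨rfl, isV10_qEl_some 2 x⟩]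
      have hT1q2 : (fun y => BT.T1 (qEl T m 2 y) (qEl T m 0 y)) = qEl T m 1 := by
        funext y
        cases y with
        | none =>
          show BT.T1 (BT.P 2) (BT.P 0) = BT.P 1
          unfold BT.T1
          rw [if_pos (Or.inr (Or.inr (Or.inr (Or.inr ⟨rfl, rfl⟩))))]
        | some x =>
          show BT.T1 (qEl T m 2 (some x)) (qEl T m 0 (some x)) = qEl T m 1 (some x)
          rw [hT1V x, qEl_some_agree 2 1 x]
      have hT1h1 : (fun y => BT.T1 (h₁ y) (qEl T m 0 y)) = h₁ := by
        funext y
        cases y with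
        | none =>
          rw [hs0]
          show BT.T1 BT.zero (BT.P 0) = BT.zero
          simp
        | some x =>
          rw [hNfull x]
          show BT.T1 (qEl T m 2 (some x)) (qEl T m 0 (some x)) = qEl T m 2 (some x)
          exact hT1V x
      have step1 := upoly_resp hR hFT1 h1R
      have hq1R : R (qEl T m 1) h₁ := by
        rwa [hT1q2, hT1h1] at step1
      have hq12 : R (qEl T m 1) (qEl T m 2) := hR.trans hq1R (hR.symm h1R)
      exact q1_case hm hR hq12

end KeyC

/-- Lemma 4.3(3): θ̄ is a congruence of K properly containing θ, and every
congruence of K properly containing θ contains θ̄; thus θ̄ is the unique cover of θ. -/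
theorem statement19 {k : ℕ} (hk : 0 < k) (T : TM k) (m : ℕ)
    (hm : ((cfgStep T)^[m] (Q0 k)).state = 0) :
    IsCongK T m (thetaBar T m) ∧
    (∀ f g : AA T m, theta T m f g → thetaBar T m f g) ∧
    (∃ f g : AA T m, thetaBar T m f g ∧ ¬ theta T m f g) ∧
    (∀ R : AA T m → AA T m → Prop, IsCongK T m R →
      (∀ f g, theta T m f g → R f g) → (∃ f g, R f g ∧ ¬ theta T m f g) →
      ∀ f g, thetaBar T m f g → R f g) := by
  refine ⟨?_, ?_, ?_, ?_⟩
  · -- thetaBar is a congruence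
    refine
      { refl := fun f hf => ⟨hf, hf, fun R hR _ _ => hR.refl f hf⟩
        symm := ?_
        trans := ?_
        dom := ?_
        t0 := ?_
        t1 := ?_
        meet := ?_
        meetI := ?_
        jop := ?_
        s1 := ?_
        s2 := ?_
        mach := ?_
        u1 := ?_
        u2 := ?_ }
    · intro f g hfg
      exact ⟨hfg.2.1, hfg.1, fun R hR hθ hq => hR.symm (hfg.2.2 R hR hθ hq)⟩
    · intro f g h h1 h2
      exact ⟨h1.1, h2.2.1, fun R hR hθ hq =>
        hR.trans (h1.2.2 R hR hθ hq) (h2.2.2 R hR hθ hq)⟩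
    · intro f g hfg
      exact ⟨hfg.1, hfg.2.1⟩
    · intro f f' h1
      exact ⟨InK.t0 h1.1, InK.t0 h1.2.1, fun R hR hθ hq => hR.t0 (h1.2.2 R hR hθ hq)⟩
    · intro f f' g g' h1 h2
      exact ⟨InK.t1 h1.1 h2.1, InK.t1 h1.2.1 h2.2.1, fun R hR hθ hq =>
        hR.t1 (h1.2.2 R hR hθ hq) (h2.2.2 R hR hθ hq)⟩
    · intro f f' g g' h1 h2
      exact ⟨InK.meet h1.1 h2.1, InK.meet h1.2.1 h2.2.1, fun R hR hθ hq =>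
        hR.meet (h1.2.2 R hR hθ hq) (h2.2.2 R hR hθ hq)⟩
    · intro j f f' g g' h1 h2
      exact ⟨InK.meetI j h1.1 h2.1, InK.meetI j h1.2.1 h2.2.1, fun R hR hθ hq =>
        hR.meetI j (h1.2.2 R hR hθ hq) (h2.2.2 R hR hθ hq)⟩
    · intro f f' g g' h h' h1 h2 h3
      exact ⟨InK.jop h1.1 h2.1 h3.1, InK.jop h1.2.1 h2.2.1 h3.2.1, fun R hR hθ hq =>
        hR.jop (h1.2.2 R hR hθ hq) (h2.2.2 R hR hθ hq) (h3.2.2 R hR hθ hq)⟩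
    · intro f f' g g' h h' p p' h1 h2 h3 h4
      exact ⟨InK.s1 h1.1 h2.1 h3.1 h4.1, InK.s1 h1.2.1 h2.2.1 h3.2.1 h4.2.1,
        fun R hR hθ hq => hR.s1 (h1.2.2 R hR hθ hq) (h2.2.2 R hR hθ hq)
          (h3.2.2 R hR hθ hq) (h4.2.2 R hR hθ hq)⟩
    · intro f f' g g' h h' p p' q q' h1 h2 h3 h4 h5
      exact ⟨InK.s2 h1.1 h2.1 h3.1 h4.1 h5.1,
        InK.s2 h1.2.1 h2.2.1 h3.2.1 h4.2.1 h5.2.1,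
        fun R hR hθ hq => hR.s2 (h1.2.2 R hR hθ hq) (h2.2.2 R hR hθ hq)
          (h3.2.2 R hR hθ hq) (h4.2.2 R hR hθ hq) (h5.2.2 R hR hθ hq)⟩
    · intro i hi r t b f f' g g' h h' h1 h2 h3
      exact ⟨InK.mach i hi r t b h1.1 h2.1 h3.1,
        InK.mach i hi r t b h1.2.1 h2.2.1 h3.2.1,
        fun R hR hθ hq => hR.mach i hi r t b (h1.2.2 R hR hθ hq)
          (h2.2.2 R hR hθ hq) (h3.2.2 R hR hθ hq)⟩
    · intro i hi r t b f f' g g' h h' p p' h1 h2 h3 h4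
      exact ⟨InK.u1 i hi r t b h1.1 h2.1 h3.1 h4.1,
        InK.u1 i hi r t b h1.2.1 h2.2.1 h3.2.1 h4.2.1,
        fun R hR hθ hq => hR.u1 i hi r t b (h1.2.2 R hR hθ hq)
          (h2.2.2 R hR hθ hq) (h3.2.2 R hR hθ hq) (h4.2.2 R hR hθ hq)⟩
    · intro i hi r t b f f' g g' h h' p p' h1 h2 h3 h4
      exact ⟨InK.u2 i hi r t b h1.1 h2.1 h3.1 h4.1,
        InK.u2 i hi r t b h1.2.1 h2.2.1 h3.2.1 h4.2.1,
        fun R hR hθ hq => hR.u2 i hi r t b (h1.2.2 R hR hθ hq)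
          (h2.2.2 R hR hθ hq) (h3.2.2 R hR hθ hq) (h4.2.2 R hR hθ hq)⟩
  · -- theta ⊆ thetaBar
    exact fun f g hθ => ⟨hθ.1, hθ.2.1, fun R hR hθ' _ => hθ' f g hθ⟩
  · -- proper containment via (q⁰, q²)
    refine ⟨qEl T m 0, qEl T m 2,
      ⟨InK.gen_q 0, InK.gen_q 2, fun R _ _ hq => hq⟩, ?_⟩
    rintro ⟨-, -, hF⟩
    have hid : UPolyK T m (fun f => f) := PolyK.proj 0
    have h02 := (hF _ hid).2 rfl
    exact qEl_ne 0 2 (by decide) h02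
  · -- unique cover
    intro R hR hθR hex f' g' hbar
    obtain ⟨f, g, hfg, hnθ⟩ := hex
    have hfK := (hR.dom hfg).1
    have hgK := (hR.dom hfg).2
    have hq02 : R (qEl T m 0) (qEl T m 2) := by
      have hnall : ¬ (∀ F, UPolyK T m F → (F f = qEl T m 2 ↔ F g = qEl T m 2)) :=
        fun hall => hnθ ⟨hfK, hgK, hall⟩
      push_neg at hnall
      obtain ⟨F, hF, hiff⟩ := hnall
      have hRF := upoly_resp hR hF hfg
      rcases hiff with ⟨hFf, hFg⟩ | ⟨hFf, hFg⟩
      · rw [hFf] at hRF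
        exact keyC hm hR hθR hRF hFg
      · rw [hFg] at hRF
        exact keyC hm hR hθR (hR.symm hRF) hFf
    exact hbar.2.2 R hR hθR hq02

end Paper
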